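/- arXiv:1002.2396 — 5 statements merged into one kernel-verified Lean document; each statement's English description precedes it below -/
import Mathlib

section
/- (Sharp John–Nirenberg inequality.) Let n ≥ 1 and set α_n = 2^{−(n+2)}. There exists a constant β_n > 1, depending only on the dimension n, such that for every locally integrable b : ℝ^n → ℝ with 0 < ‖b‖_{BMO} < ∞ and every cube Q ⊂ ℝ^n with sides parallel to the axes, one has |Q|⁻¹ ∫_Q exp( (α_n/‖b‖_{BMO}) |b(y) − b_Q| ) dy ≤ β_n. -/
/-!
Calderón–Zygmund decomposition of `|b - b_Q|` on `Q` at height `2‖b‖` (stopping on dyadic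
subcubes) gives cubes `Q_j` with `∑ |Q_j| ≤ |Q| / 2` and `|b_{Q_j} - b_Q| ≤ 2^{n+1} ‖b‖`, while
`|b - b_Q| ≤ 2‖b‖` a.e. off `⋃ Q_j` by Lebesgue differentiation. Hence
`F(t) = sup_Q |{x ∈ Q : |b x - b_Q| > t}| / |Q|` satisfies `F(t + J) ≤ F(t) / 2` with
`J = 2^{n+1} ‖b‖`, so `F(k J) ≤ 2^{-k}`. Summing `exp (α_n |b - b_Q| / ‖b‖)` over the layers
`k J ≤ |b - b_Q| < (k+1) J` then gives a convergent series, since `α_n J / ‖b‖ = 1/2`.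
-/

open MeasureTheory ENNReal

noncomputable section

/-- Axis-parallel cube in `ℝⁿ` with lower corner `a` and side length `h`. -/
def Cube (n : ℕ) (a : Fin n → ℝ) (h : ℝ) : Set (Fin n → ℝ) :=
  {x | ∀ i, a i ≤ x i ∧ x i ≤ a i + h}

/-- `|Q|⁻¹ ∫_Q f`, as an extended nonnegative real (for nonnegative `f`). -/
def setAvg (n : ℕ) (Q : Set (Fin n → ℝ)) (f : (Fin n → ℝ) → ℝ) : ℝ≥0∞ :=
  (volume Q)⁻¹ * ∫⁻ x in Q, ENNReal.ofReal (f x)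

/-- `|Q|⁻¹ ∫_Q f`, as a real number. -/
def intAvg (n : ℕ) (Q : Set (Fin n → ℝ)) (f : (Fin n → ℝ) → ℝ) : ℝ :=
  ((volume Q).toReal)⁻¹ * ∫ x in Q, f x

/-- The `A₂` constant `[w]_{A₂} = sup_Q (|Q|⁻¹∫_Q w)(|Q|⁻¹∫_Q w⁻¹)`. -/
def A2const (n : ℕ) (w : (Fin n → ℝ) → ℝ) : ℝ≥0∞ :=
  ⨆ (a : Fin n → ℝ) (h : ℝ) (_ : 0 < h),
    setAvg n (Cube n a h) w * setAvg n (Cube n a h) (fun x => (w x)⁻¹)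

/-- `w` is a weight in the Muckenhoupt class `A₂`. -/
def IsA2 (n : ℕ) (w : (Fin n → ℝ) → ℝ) : Prop :=
  (∀ x, 0 < w x) ∧ LocallyIntegrable w ∧ A2const n w < ⊤

/-- The `BMO` norm `‖b‖_{BMO} = sup_Q |Q|⁻¹ ∫_Q |b - b_Q|`. -/
def bmoNorm (n : ℕ) (b : (Fin n → ℝ) → ℝ) : ℝ≥0∞ :=
  ⨆ (a : Fin n → ℝ) (h : ℝ) (_ : 0 < h),
    setAvg n (Cube n a h) (fun y => |b y - intAvg n (Cube n a h) b|)

/-- The weighted norm `‖f‖_{L^p(w)} = (∫ |f|^p w)^{1/p}`. -/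
def wNorm (n : ℕ) (p : ℝ) (w f : (Fin n → ℝ) → ℝ) : ℝ≥0∞ :=
  (∫⁻ x, (ENNReal.ofReal |f x|) ^ p * ENNReal.ofReal (w x)) ^ (1 / p)

/-- The commutator `[b,T] f = b · T f - T (b f)`. -/
def commOp {n : ℕ} (b : (Fin n → ℝ) → ℝ)
    (T : ((Fin n → ℝ) → ℝ) → ((Fin n → ℝ) → ℝ)) :
    ((Fin n → ℝ) → ℝ) → ((Fin n → ℝ) → ℝ) :=
  fun f x => b x * T f x - T (fun y => b y * f y) x

/-- Higher order commutators: `T_b^0 = T`, `T_b^k = [b, T_b^{k-1}]`. -/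
def commIter {n : ℕ} (b : (Fin n → ℝ) → ℝ)
    (T : ((Fin n → ℝ) → ℝ) → ((Fin n → ℝ) → ℝ)) :
    ℕ → ((Fin n → ℝ) → ℝ) → ((Fin n → ℝ) → ℝ)
  | 0 => T
  | (k+1) => commOp b (commIter b T k)

/-- `T` is a linear operator on functions. -/
def IsLinearOp (n : ℕ) (T : ((Fin n → ℝ) → ℝ) → ((Fin n → ℝ) → ℝ)) : Prop :=
  (∀ f g, T (f + g) = T f + T g) ∧ (∀ (c : ℝ) (f), T (c • f) = c • T f)

open Set Filter Topology

section Average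

variable {X : Type*} [MeasurableSpace X]

lemma ofReal_integral_le_lintegral_ofReal (μ : Measure X) (f : X → ℝ) :
    ENNReal.ofReal (∫ x, f x ∂μ) ≤ ∫⁻ x, ENNReal.ofReal (f x) ∂μ := by
  by_cases hf : Integrable f μ
  · rw [integral_eq_lintegral_pos_part_sub_lintegral_neg_part hf]
    exact (ENNReal.ofReal_le_ofReal (sub_le_self _ ENNReal.toReal_nonneg)).trans
      ENNReal.ofReal_toReal_le
  · simp [integral_undef hf]

lemma ofReal_setAverage_le (μ : Measure X) (s : Set X) (f : X → ℝ) :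
    ENNReal.ofReal (⨍ x in s, f x ∂μ) ≤ (∫⁻ x in s, ENNReal.ofReal (f x) ∂μ) / μ s := by
  rcases eq_or_ne (μ s) 0 with hs | hs
  · simp [Measure.restrict_eq_zero.2 hs]
  rw [setAverage_eq, smul_eq_mul, measureReal_def, ← ENNReal.toReal_inv,
    ENNReal.ofReal_mul ENNReal.toReal_nonneg, ENNReal.ofReal_toReal (ENNReal.inv_ne_top.2 hs),
    ENNReal.div_eq_inv_mul]
  gcongr
  exact ofReal_integral_le_lintegral_ofReal _ _

lemma ofReal_abs_setAverage_sub_le {μ : Measure X} {s : Set X} {f : X → ℝ} (hs0 : μ s ≠ 0)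
    (hs : μ s ≠ ∞) (hf : IntegrableOn f s μ) (c : ℝ) :
    ENNReal.ofReal |⨍ x in s, f x ∂μ - c| ≤ (∫⁻ x in s, ENNReal.ofReal |f x - c| ∂μ) / μ s := by
  have hsub : ⨍ x in s, f x ∂μ - c = ⨍ x in s, (f x - c) ∂μ := by
    rw [setAverage_eq, setAverage_eq, integral_sub hf (integrableOn_const hs), setIntegral_const,
      smul_sub, smul_smul, measureReal_def, inv_mul_cancel₀ (ENNReal.toReal_ne_zero.2 ⟨hs0, hs⟩),
      one_smul]
  refine le_trans ?_ (ofReal_setAverage_le μ s fun x => |f x - c|)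
  refine ENNReal.ofReal_le_ofReal ?_
  rw [hsub, setAverage_eq, setAverage_eq, smul_eq_mul, smul_eq_mul, abs_mul,
    abs_of_nonneg (inv_nonneg.2 measureReal_nonneg)]
  exact mul_le_mul_of_nonneg_left (abs_integral_le_integral_abs) (inv_nonneg.2 measureReal_nonneg)

end Average

section ExponentialIntegrability

open Real

/-- `∑ₖ e^{(k+1)/2} · 2^{1-k}`: the bound obtained by splitting into the layers
`k J ≤ f < (k+1) J` on which the superlevel sets decay like `2^{-k}`. -/
def johnNirenbergBound : ℝ := 2 * exp (1 / 2) / (1 - exp (1 / 2) / 2)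

lemma exp_half_lt_two : exp (1 / 2) < 2 := by
  calc exp (1 / 2) < exp (log 2) := exp_lt_exp.2 (by linarith [log_two_gt_d9])
    _ = 2 := exp_log two_pos

lemma one_lt_johnNirenbergBound : 1 < johnNirenbergBound := by
  have := exp_half_lt_two
  have := one_lt_exp_iff.2 (by norm_num : (0 : ℝ) < 1 / 2)
  rw [johnNirenbergBound, one_lt_div (by linarith)]
  linarith

lemma tsum_ofReal_exp_mul_two_pow_inv :
    ∑' k : ℕ, ENNReal.ofReal (exp ((k + 1) / 2)) * (2 * 2⁻¹ ^ k) =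
      ENNReal.ofReal johnNirenbergBound := by
  have hr₀ : 0 ≤ exp (1 / 2) / 2 := by positivity
  have hr₁ : exp (1 / 2) / 2 < 1 := by linarith [exp_half_lt_two]
  have hterm (k : ℕ) : ENNReal.ofReal (exp ((k + 1) / 2)) * (2 * 2⁻¹ ^ k) =
      ENNReal.ofReal (2 * exp (1 / 2) * (exp (1 / 2) / 2) ^ k) := by
    rw [show (2 : ℝ≥0∞) * 2⁻¹ ^ k = ENNReal.ofReal (2 * 2⁻¹ ^ k) by
      rw [ENNReal.ofReal_mul zero_le_two, ENNReal.ofReal_pow (by norm_num),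
        ENNReal.ofReal_inv_of_pos two_pos, ENNReal.ofReal_ofNat],
      ← ENNReal.ofReal_mul (exp_nonneg _), div_pow, ← exp_nat_mul, add_div, exp_add]
    congr 1
    field_simp
    rw [← mul_pow]
    norm_num
  simp_rw [hterm]
  rw [← ENNReal.ofReal_tsum_of_nonneg (fun k => by positivity)
    ((summable_geometric_of_lt_one hr₀ hr₁).mul_left _), tsum_mul_left,
    tsum_geometric_of_lt_one hr₀ hr₁, johnNirenbergBound, div_eq_mul_inv (2 * exp (1 / 2))]

variable {X : Type*} [MeasurableSpace X] {μ : Measure X} {s : Set X} {f : X → ℝ} {J : ℝ}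

lemma measure_floor_div_preimage_inter_le (hJ : 0 < J)
    (hdecay : ∀ k : ℕ, μ (s ∩ {x | k * J < f x}) ≤ 2⁻¹ ^ k * μ s) (k : ℕ) :
    μ ((fun x => ⌊f x / J⌋₊) ⁻¹' {k} ∩ s) ≤ 2 * 2⁻¹ ^ k * μ s := by
  cases k with
  | zero => simpa using (measure_mono inter_subset_right).trans (le_mul_of_one_le_left' one_le_two)
  | succ k =>
    calc μ ((fun x => ⌊f x / J⌋₊) ⁻¹' {k + 1} ∩ s) ≤ μ (s ∩ {x | k * J < f x}) := by
          refine measure_mono fun x ⟨hx, hxs⟩ => ⟨hxs, ?_⟩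
          have := (Nat.le_floor_iff' k.succ_ne_zero).1 hx.ge
          rw [le_div_iff₀ hJ] at this
          push_cast at this
          show k * J < f x
          linarith
      _ ≤ 2⁻¹ ^ k * μ s := hdecay k
      _ = 2 * 2⁻¹ ^ (k + 1) * μ s := by
          rw [pow_succ, mul_comm (2 : ℝ≥0∞), mul_assoc (2⁻¹ ^ k), ENNReal.inv_mul_cancel
            two_ne_zero ENNReal.ofNat_ne_top, mul_one]

lemma setLIntegral_exp_le_of_superlevel_decay (hs : MeasurableSet s)
    (hf : AEMeasurable f (μ.restrict s)) (hJ : 0 < J)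
    (hdecay : ∀ k : ℕ, μ (s ∩ {x | k * J < f x}) ≤ 2⁻¹ ^ k * μ s) :
    ∫⁻ x in s, ENNReal.ofReal (exp (f x / (2 * J))) ∂μ ≤
      ENNReal.ofReal johnNirenbergBound * μ s := by
  set N : X → ℕ := fun x => ⌊f x / J⌋₊
  have hN : AEMeasurable N (μ.restrict s) := Nat.measurable_floor.comp_aemeasurable (hf.div_const J)
  calc ∫⁻ x in s, ENNReal.ofReal (exp (f x / (2 * J))) ∂μ
      ≤ ∫⁻ x in s, ENNReal.ofReal (exp ((N x + 1) / 2)) ∂μ := by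
        refine lintegral_mono fun x => ENNReal.ofReal_le_ofReal (exp_le_exp.2 ?_)
        have := Nat.lt_floor_add_one (f x / J)
        rw [div_mul_eq_div_div_swap]
        linarith
    _ = ∑' k : ℕ, ENNReal.ofReal (exp ((k + 1) / 2)) * μ (N ⁻¹' {k} ∩ s) := by
        rw [← lintegral_map' (f := fun k : ℕ => ENNReal.ofReal (exp ((k + 1) / 2)))
          (measurable_of_countable _).aemeasurable hN, lintegral_countable']
        simp_rw [Measure.map_apply_of_aemeasurable hN (measurableSet_singleton _),
          Measure.restrict_apply' hs]
    _ ≤ ∑' k : ℕ, ENNReal.ofReal (exp ((k + 1) / 2)) * (2 * 2⁻¹ ^ k) * μ s := by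
        refine ENNReal.tsum_le_tsum fun k => ?_
        rw [mul_assoc]
        exact mul_le_mul_right (measure_floor_div_preimage_inter_le hJ hdecay k) _
    _ = ENNReal.ofReal johnNirenbergBound * μ s := by
        rw [ENNReal.tsum_mul_right, tsum_ofReal_exp_mul_two_pow_inv]

end ExponentialIntegrability

section Cube

variable {n : ℕ}

lemma cube_eq_Icc (a : Fin n → ℝ) (h : ℝ) : Cube n a h = Icc a (fun i => a i + h) := by
  ext x
  simp [Cube, Pi.le_def, forall_and]

lemma cube_eq_closedBall (a : Fin n → ℝ) {h : ℝ} (hh : 0 ≤ h) :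
    Cube n a h = Metric.closedBall (fun i => a i + h / 2) (h / 2) := by
  ext x
  simp only [Cube, mem_ofPred_eq, Metric.mem_closedBall, dist_pi_le_iff (by linarith : 0 ≤ h / 2),
    Real.dist_eq, abs_sub_le_iff]
  refine forall_congr' fun i => ?_
  constructor <;> intro hx <;> constructor <;> linarith [hx.1, hx.2]

lemma measurableSet_cube (a : Fin n → ℝ) (h : ℝ) : MeasurableSet (Cube n a h) := by
  rw [cube_eq_Icc]
  exact measurableSet_Icc

lemma isCompact_cube (a : Fin n → ℝ) (h : ℝ) : IsCompact (Cube n a h) := by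
  rw [cube_eq_Icc]
  exact isCompact_Icc

lemma volume_cube (a : Fin n → ℝ) {h : ℝ} (hh : 0 ≤ h) :
    volume (Cube n a h) = ENNReal.ofReal (h ^ n) := by
  simp [cube_eq_Icc, Real.volume_Icc_pi, ENNReal.ofReal_pow hh]

lemma volume_cube_ne_zero (a : Fin n → ℝ) {h : ℝ} (hh : 0 < h) : volume (Cube n a h) ≠ 0 := by
  rw [volume_cube a hh.le]
  positivity

lemma volume_cube_ne_top (a : Fin n → ℝ) (h : ℝ) : volume (Cube n a h) ≠ ∞ :=
  (isCompact_cube a h).measure_ne_top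

end Cube

section Dyadic

variable {n : ℕ} (a : Fin n → ℝ) (h : ℝ)

def dyadicCube (k : ℕ) (j : Fin n → ℕ) : Set (Fin n → ℝ) :=
  Cube n (fun i => a i + h / 2 ^ k * j i) (h / 2 ^ k)

/-- Half-open dyadic cubes: unlike the closed ones, those of one generation are disjoint. -/
def dyadicBox (k : ℕ) (j : Fin n → ℕ) : Set (Fin n → ℝ) :=
  pi univ fun i => Ico (a i + h / 2 ^ k * j i) (a i + h / 2 ^ k * (j i + 1))

def dyadicIndex (k : ℕ) (x : Fin n → ℝ) : Fin n → ℕ :=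
  fun i => ⌊(x i - a i) / (h / 2 ^ k)⌋₊

variable {a h}

lemma dyadicBox_ae_eq_dyadicCube (k : ℕ) (j : Fin n → ℕ) :
    dyadicBox a h k j =ᵐ[volume] dyadicCube a h k j := by
  simp_rw [dyadicCube, cube_eq_Icc, dyadicBox, volume_pi, mul_add_one, ← add_assoc]
  exact Measure.univ_pi_Ico_ae_eq_Icc

lemma dyadicCube_zero : dyadicCube a h 0 0 = Cube n a h := by
  simp [dyadicCube]

lemma dyadicBox_subset_dyadicCube (k : ℕ) (j : Fin n → ℕ) :
    dyadicBox a h k j ⊆ dyadicCube a h k j := fun x hx i =>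
  ⟨(hx i trivial).1, by linarith [(hx i trivial).2]⟩

lemma measurableSet_dyadicBox (k : ℕ) (j : Fin n → ℕ) : MeasurableSet (dyadicBox a h k j) :=
  MeasurableSet.univ_pi fun _ => measurableSet_Ico

lemma volume_dyadicBox (hh : 0 ≤ h) (k : ℕ) (j : Fin n → ℕ) :
    volume (dyadicBox a h k j) = ENNReal.ofReal ((h / 2 ^ k) ^ n) := by
  rw [measure_congr (dyadicBox_ae_eq_dyadicCube k j), dyadicCube, volume_cube _ (by positivity)]

lemma volume_dyadicBox_ne_zero (hh : 0 < h) (k : ℕ) (j : Fin n → ℕ) :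
    volume (dyadicBox a h k j) ≠ 0 := by
  rw [volume_dyadicBox hh.le]
  positivity

lemma volume_dyadicBox_ne_top (k : ℕ) (j : Fin n → ℕ) : volume (dyadicBox a h k j) ≠ ∞ := by
  rw [measure_congr (dyadicBox_ae_eq_dyadicCube k j)]
  exact volume_cube_ne_top _ _

lemma volume_dyadicBox_succ (hh : 0 ≤ h) (k : ℕ) (j j' : Fin n → ℕ) :
    volume (dyadicBox a h k j) = 2 ^ n * volume (dyadicBox a h (k + 1) j') := by
  rw [volume_dyadicBox hh, volume_dyadicBox hh, ← ENNReal.ofReal_ofNat, ← ENNReal.ofReal_pow,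
    ← ENNReal.ofReal_mul, ← mul_pow, pow_succ, div_mul_eq_div_div, mul_div_cancel₀] <;>
  positivity

lemma dyadicCube_subset_cube (hh : 0 ≤ h) {k : ℕ} {j : Fin n → ℕ} (hj : ∀ i, j i < 2 ^ k) :
    dyadicCube a h k j ⊆ Cube n a h := by
  intro x hx i
  have hs : h / 2 ^ k * (j i + 1) ≤ h := by
    rw [div_mul_eq_mul_div, div_le_iff₀ (by positivity)]
    exact mul_le_mul_of_nonneg_left (by exact_mod_cast hj i) hh
  have := mul_nonneg (div_nonneg hh (by positivity : (0 : ℝ) ≤ 2 ^ k)) (Nat.cast_nonneg (j i))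
  constructor <;> linarith [hx i]

lemma dyadicIndex_eq_of_mem_dyadicBox (hh : 0 < h) {k : ℕ} {j : Fin n → ℕ} {x : Fin n → ℝ}
    (hx : x ∈ dyadicBox a h k j) : dyadicIndex a h k x = j := by
  funext i
  obtain ⟨h₁, h₂⟩ := hx i trivial
  have hs : 0 < h / 2 ^ k := by positivity
  have hj : (j i : ℝ) ≤ (x i - a i) / (h / 2 ^ k) := by
    rw [le_div_iff₀ hs]; linarith
  rw [dyadicIndex, Nat.floor_eq_iff ((Nat.cast_nonneg _).trans hj)]
  exact ⟨hj, by rw [div_lt_iff₀ hs]; linarith⟩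

lemma le_of_mem_dyadicBox (hh : 0 ≤ h) {k : ℕ} {j : Fin n → ℕ} {x : Fin n → ℝ}
    (hx : x ∈ dyadicBox a h k j) (i : Fin n) : a i ≤ x i := by
  have := mul_nonneg (div_nonneg hh (by positivity : (0 : ℝ) ≤ 2 ^ k)) (Nat.cast_nonneg (j i))
  linarith [(hx i trivial).1]

lemma mem_dyadicBox_dyadicIndex (hh : 0 < h) (k : ℕ) {x : Fin n → ℝ} (hx : ∀ i, a i ≤ x i) :
    x ∈ dyadicBox a h k (dyadicIndex a h k x) := by
  intro i _
  have hs : 0 < h / 2 ^ k := by positivity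
  have hy : 0 ≤ (x i - a i) / (h / 2 ^ k) := div_nonneg (sub_nonneg.2 (hx i)) hs.le
  simp only [dyadicIndex]
  constructor
  · have := Nat.floor_le hy
    rw [le_div_iff₀ hs] at this
    linarith
  · have := Nat.lt_floor_add_one ((x i - a i) / (h / 2 ^ k))
    rw [div_lt_iff₀ hs] at this
    linarith

lemma dyadicIndex_add_div (k m : ℕ) (x : Fin n → ℝ) (i : Fin n) :
    dyadicIndex a h (k + m) x i / 2 ^ m = dyadicIndex a h k x i := by
  rw [dyadicIndex, dyadicIndex, ← Nat.floor_div_natCast]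
  push_cast
  rw [pow_add, div_div, div_mul_eq_mul_div, mul_div_mul_right _ _ (by positivity)]

lemma dyadicBox_subset_dyadicBox_div (hh : 0 < h) (k m : ℕ) (j : Fin n → ℕ) :
    dyadicBox a h (k + m) j ⊆ dyadicBox a h k (fun i => j i / 2 ^ m) := by
  intro x hx
  rw [← dyadicIndex_eq_of_mem_dyadicBox hh hx]
  simp_rw [dyadicIndex_add_div]
  exact mem_dyadicBox_dyadicIndex hh k (le_of_mem_dyadicBox hh.le hx)

end Dyadic

section CalderonZygmund

variable {n : ℕ} (g : (Fin n → ℝ) → ℝ) (a : Fin n → ℝ) (h : ℝ) (ℓ : ℝ≥0∞)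

def CZStops (k : ℕ) (j : Fin n → ℕ) : Prop :=
  ℓ * volume (dyadicBox a h k j) < ∫⁻ x in dyadicBox a h k j, ENNReal.ofReal (g x)

def czSelection : Set (ℕ × (Fin n → ℕ)) :=
  {p | (∀ i, p.2 i < 2 ^ p.1) ∧ CZStops g a h ℓ p.1 p.2 ∧
    ∀ m < p.1, ¬ CZStops g a h ℓ m (fun i => p.2 i / 2 ^ (p.1 - m))}

variable {g a h ℓ}

lemma eq_of_mem_czSelection_of_le (hh : 0 < h) {p q : ℕ × (Fin n → ℕ)}
    (hp : p ∈ czSelection g a h ℓ) (hq : q ∈ czSelection g a h ℓ) (hpq : p.1 ≤ q.1)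
    {x : Fin n → ℝ} (hxp : x ∈ dyadicBox a h p.1 p.2) (hxq : x ∈ dyadicBox a h q.1 q.2) :
    p = q := by
  obtain ⟨k, j⟩ := p
  obtain ⟨k', j'⟩ := q
  obtain ⟨m, rfl⟩ := Nat.exists_eq_add_of_le hpq
  dsimp only at hxp hxq hq ⊢
  have hj : (fun i => j' i / 2 ^ (k + m - k)) = j := by
    funext i
    rw [Nat.add_sub_cancel_left, ← dyadicIndex_eq_of_mem_dyadicBox hh hxq,
      ← dyadicIndex_eq_of_mem_dyadicBox hh hxp, dyadicIndex_add_div]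
  rcases Nat.eq_zero_or_pos m with rfl | hm
  · simpa [eq_comm] using hj
  · exact absurd (hj ▸ hp.2.1) (hq.2.2 k (by omega))

lemma pairwise_disjoint_czSelection (hh : 0 < h) :
    Pairwise (Function.onFun Disjoint
      fun p : czSelection g a h ℓ => dyadicBox a h p.1.1 p.1.2) := by
  intro p q hpq
  refine Set.disjoint_left.2 fun x hxp hxq => hpq (Subtype.ext ?_)
  rcases le_total p.1.1 q.1.1 with hle | hle
  · exact eq_of_mem_czSelection_of_le hh p.2 q.2 hle hxp hxq
  · exact (eq_of_mem_czSelection_of_le hh q.2 p.2 hle hxq hxp).symm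

lemma exists_mem_czSelection_of_czStops (hh : 0 < h) {x : Fin n → ℝ}
    (hx : x ∈ dyadicBox a h 0 0) (hstop : ∃ k, CZStops g a h ℓ k (dyadicIndex a h k x)) :
    ∃ p ∈ czSelection g a h ℓ, x ∈ dyadicBox a h p.1 p.2 := by
  classical
  have hax := le_of_mem_dyadicBox hh.le hx
  have hroot : dyadicIndex a h 0 x = 0 := dyadicIndex_eq_of_mem_dyadicBox hh hx
  refine ⟨(Nat.find hstop, dyadicIndex a h (Nat.find hstop) x), ⟨fun i => ?_, Nat.find_spec hstop,
    fun m hm => ?_⟩, mem_dyadicBox_dyadicIndex hh _ hax⟩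
  · have := dyadicIndex_add_div (a := a) (h := h) 0 (Nat.find hstop) x i
    rw [zero_add, hroot] at this
    exact (Nat.div_eq_zero_iff_lt (by positivity)).1 this
  · convert Nat.find_min hstop hm using 2
    funext i
    rw [← dyadicIndex_add_div m, Nat.add_sub_cancel' hm.le]

lemma lintegral_dyadicCube_le_of_mem_czSelection (hh : 0 < h)
    (hQ : ∫⁻ x in Cube n a h, ENNReal.ofReal (g x) ≤ ℓ * volume (Cube n a h))
    {p : ℕ × (Fin n → ℕ)} (hp : p ∈ czSelection g a h ℓ) :
    ∫⁻ x in dyadicCube a h p.1 p.2, ENNReal.ofReal (g x) ≤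
      2 ^ n * ℓ * volume (dyadicCube a h p.1 p.2) := by
  obtain ⟨k, j⟩ := p
  rw [← setLIntegral_congr (dyadicBox_ae_eq_dyadicCube k j),
    ← measure_congr (dyadicBox_ae_eq_dyadicCube k j)]
  cases k with
  | zero =>
    have hj : j = 0 := funext fun i => Nat.lt_one_iff.1 (hp.1 i)
    have hroot := dyadicBox_ae_eq_dyadicCube (a := a) (h := h) 0 0
    have hstop := hp.2.1
    rw [hj, CZStops, setLIntegral_congr hroot, measure_congr hroot, dyadicCube_zero] at hstop
    exact absurd hQ (not_le.2 hstop)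
  | succ k =>
    have hparent := hp.2.2 k k.lt_succ_self
    simp only [CZStops, Nat.add_sub_cancel_left, pow_one, not_lt] at hparent
    calc ∫⁻ x in dyadicBox a h (k + 1) j, ENNReal.ofReal (g x)
        ≤ ∫⁻ x in dyadicBox a h k (fun i => j i / 2), ENNReal.ofReal (g x) := by
          simpa using lintegral_mono_set (dyadicBox_subset_dyadicBox_div hh k 1 j)
      _ ≤ ℓ * volume (dyadicBox a h k (fun i => j i / 2)) := hparent
      _ = 2 ^ n * ℓ * volume (dyadicBox a h (k + 1) j) := by
          rw [volume_dyadicBox_succ hh.le k _ j]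
          ring

lemma ae_ofReal_le_of_forall_not_czStops (hg : LocallyIntegrable g) (hh : 0 < h) :
    ∀ᵐ x, x ∈ Cube n a h → (∀ k, ¬ CZStops g a h ℓ k (dyadicIndex a h k x)) →
      ENNReal.ofReal (g x) ≤ ℓ := by
  filter_upwards [IsUnifLocDoublingMeasure.ae_tendsto_average (μ := volume) hg 1]
    with x hlim hxQ hstop
  set J := fun k => dyadicIndex a h k x
  set center : ℕ → Fin n → ℝ := fun k i => a i + h / 2 ^ k * J k i + h / 2 ^ k / 2
  have hball (k : ℕ) : dyadicCube a h k (J k) = Metric.closedBall (center k) (h / 2 ^ k / 2) :=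
    cube_eq_closedBall _ (by positivity)
  have hradius : Tendsto (fun k : ℕ => h / 2 ^ k / 2) atTop (𝓝[>] 0) := by
    refine tendsto_nhdsWithin_iff.2 ⟨?_, Eventually.of_forall fun k => mem_Ioi.2 (by positivity)⟩
    convert ((tendsto_pow_atTop_nhds_zero_of_lt_one (by norm_num : (0 : ℝ) ≤ 2⁻¹)
      (by norm_num)).const_mul h).div_const 2 using 2 with k
    · rw [inv_pow, div_eq_mul_inv h]
    · simp
  have hmem (k : ℕ) : x ∈ Metric.closedBall (center k) (1 * (h / 2 ^ k / 2)) := by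
    rw [one_mul, ← hball]
    exact dyadicBox_subset_dyadicCube _ _ (mem_dyadicBox_dyadicIndex hh k fun i => (hxQ i).1)
  refine le_of_tendsto' ((ENNReal.continuous_ofReal.tendsto _).comp
    (hlim center _ hradius (Eventually.of_forall hmem))) fun k => ?_
  refine (ofReal_setAverage_le _ _ _).trans ?_
  rw [← hball, ← setLIntegral_congr (dyadicBox_ae_eq_dyadicCube k (J k)),
    ← measure_congr (dyadicBox_ae_eq_dyadicCube k (J k)),
    ENNReal.div_le_iff (volume_dyadicBox_ne_zero hh k _) (volume_dyadicBox_ne_top k _)]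
  exact not_lt.1 (hstop k)

theorem exists_calderonZygmund_cubes (hg : LocallyIntegrable g) (hh : 0 < h)
    (hQ : ∫⁻ x in Cube n a h, ENNReal.ofReal (g x) ≤ ℓ * volume (Cube n a h)) :
    ∃ (ι : Type) (_ : Countable ι) (c : ι → Fin n → ℝ) (r : ι → ℝ), (∀ i, 0 < r i) ∧
      ℓ * ∑' i, volume (Cube n (c i) (r i)) ≤ ∫⁻ x in Cube n a h, ENNReal.ofReal (g x) ∧
      (∀ i, ∫⁻ x in Cube n (c i) (r i), ENNReal.ofReal (g x) ≤
        2 ^ n * ℓ * volume (Cube n (c i) (r i))) ∧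
      ∀ᵐ x, x ∈ Cube n a h → x ∉ ⋃ i, Cube n (c i) (r i) → ENNReal.ofReal (g x) ≤ ℓ := by
  refine ⟨czSelection g a h ℓ, inferInstance, fun p i => a i + h / 2 ^ p.1.1 * p.1.2 i,
    fun p => h / 2 ^ p.1.1, fun p => by positivity, ?_,
    fun p => lintegral_dyadicCube_le_of_mem_czSelection hh hQ p.2, ?_⟩
  · calc ℓ * ∑' p : czSelection g a h ℓ, volume (dyadicCube a h p.1.1 p.1.2)
        = ∑' p : czSelection g a h ℓ, ℓ * volume (dyadicBox a h p.1.1 p.1.2) := by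
          rw [← ENNReal.tsum_mul_left]
          simp_rw [measure_congr (dyadicBox_ae_eq_dyadicCube _ _)]
      _ ≤ ∑' p : czSelection g a h ℓ, ∫⁻ x in dyadicBox a h p.1.1 p.1.2, ENNReal.ofReal (g x) :=
          ENNReal.tsum_le_tsum fun p => p.2.2.1.le
      _ = ∫⁻ x in ⋃ p : czSelection g a h ℓ, dyadicBox a h p.1.1 p.1.2, ENNReal.ofReal (g x) :=
          (lintegral_iUnion (fun _ => measurableSet_dyadicBox _ _)
            (pairwise_disjoint_czSelection hh) _).symm
      _ ≤ ∫⁻ x in Cube n a h, ENNReal.ofReal (g x) :=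
          lintegral_mono_set <| iUnion_subset fun p => (dyadicBox_subset_dyadicCube _ _).trans
            (dyadicCube_subset_cube hh.le p.2.1)
  · have hroot : Cube n a h =ᵐ[volume] dyadicBox a h 0 0 := by
      simpa [dyadicCube_zero] using (dyadicBox_ae_eq_dyadicCube (a := a) (h := h) 0 0).symm
    filter_upwards [ae_ofReal_le_of_forall_not_czStops (ℓ := ℓ) hg hh, hroot.le]
      with x hle hxroot hxQ hxU
    refine hle hxQ fun k hk => hxU ?_
    obtain ⟨p, hp, hxp⟩ := exists_mem_czSelection_of_czStops hh (hxroot hxQ) ⟨k, hk⟩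
    exact mem_iUnion.2 ⟨⟨p, hp⟩, dyadicBox_subset_dyadicCube _ _ hxp⟩

end CalderonZygmund

section BMO

variable {n : ℕ} {b : (Fin n → ℝ) → ℝ}

lemma intAvg_eq_setAverage (s : Set (Fin n → ℝ)) :
    intAvg n s b = ⨍ y in s, b y := by
  rw [setAverage_eq, smul_eq_mul]
  rfl

lemma lintegral_abs_sub_intAvg_le_bmoNorm (a : Fin n → ℝ) {h : ℝ} (hh : 0 < h) :
    ∫⁻ x in Cube n a h, ENNReal.ofReal |b x - intAvg n (Cube n a h) b| ≤
      bmoNorm n b * volume (Cube n a h) := by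
  have hle : setAvg n (Cube n a h) (fun y => |b y - intAvg n (Cube n a h) b|) ≤ bmoNorm n b :=
    le_iSup_of_le a (le_iSup_of_le h (le_iSup_of_le hh le_rfl))
  rwa [setAvg, ENNReal.inv_mul_le_iff (volume_cube_ne_zero a hh) (volume_cube_ne_top a h),
    mul_comm] at hle

lemma abs_intAvg_sub_le (hb : LocallyIntegrable b) (a : Fin n → ℝ) {h : ℝ} (hh : 0 < h) (c : ℝ)
    {t : ℝ≥0∞} (ht : t ≠ ∞)
    (hle : ∫⁻ x in Cube n a h, ENNReal.ofReal |b x - c| ≤ t * volume (Cube n a h)) :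
    |intAvg n (Cube n a h) b - c| ≤ t.toReal := by
  rw [intAvg_eq_setAverage, ← ENNReal.ofReal_le_iff_le_toReal ht]
  exact (ofReal_abs_setAverage_sub_le (volume_cube_ne_zero a hh) (volume_cube_ne_top a h)
    (hb.integrableOn_isCompact (isCompact_cube a h)) c).trans (ENNReal.div_le_of_le_mul hle)

lemma locallyIntegrable_abs_sub_const (hb : LocallyIntegrable b) (c : ℝ) :
    LocallyIntegrable fun x => |b x - c| :=
  (hb.sub (locallyIntegrable_const c)).mono
    (hb.sub (locallyIntegrable_const c)).aestronglyMeasurable.norm (ae_of_all _ fun x => by simp)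

def bmoDistribution (n : ℕ) (b : (Fin n → ℝ) → ℝ) (t : ℝ) : ℝ≥0∞ :=
  ⨆ (a : Fin n → ℝ) (h : ℝ) (_ : 0 < h),
    volume (Cube n a h ∩ {x | t < |b x - intAvg n (Cube n a h) b|}) / volume (Cube n a h)

lemma bmoDistribution_le_one (t : ℝ) : bmoDistribution n b t ≤ 1 :=
  iSup_le fun _ => iSup_le fun _ => iSup_le fun _ =>
    ENNReal.div_le_of_le_mul (by rw [one_mul]; exact measure_mono inter_subset_left)

lemma measure_le_bmoDistribution_mul (a : Fin n → ℝ) {h : ℝ} (hh : 0 < h) (t : ℝ) :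
    volume (Cube n a h ∩ {x | t < |b x - intAvg n (Cube n a h) b|}) ≤
      bmoDistribution n b t * volume (Cube n a h) :=
  (ENNReal.div_le_iff (volume_cube_ne_zero a hh) (volume_cube_ne_top a h)).1 <|
    le_iSup_of_le a (le_iSup_of_le h (le_iSup_of_le hh le_rfl))

theorem exists_calderonZygmund_cubes_of_bmoNorm (hb : LocallyIntegrable b)
    (hB0 : bmoNorm n b ≠ 0) (hBt : bmoNorm n b ≠ ∞) (a : Fin n → ℝ) {h : ℝ} (hh : 0 < h) :
    ∃ (ι : Type) (_ : Countable ι) (c : ι → Fin n → ℝ) (r : ι → ℝ), (∀ i, 0 < r i) ∧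
      ∑' i, volume (Cube n (c i) (r i)) ≤ volume (Cube n a h) / 2 ∧
      (∀ i, |intAvg n (Cube n (c i) (r i)) b - intAvg n (Cube n a h) b| ≤
        2 ^ (n + 1) * (bmoNorm n b).toReal) ∧
      ∀ᵐ x, x ∈ Cube n a h → x ∉ ⋃ i, Cube n (c i) (r i) →
        |b x - intAvg n (Cube n a h) b| ≤ 2 * (bmoNorm n b).toReal := by
  set c₀ := intAvg n (Cube n a h) b
  set B := bmoNorm n b
  have hosc := lintegral_abs_sub_intAvg_le_bmoNorm (b := b) a hh
  obtain ⟨ι, _, c, r, hr, hsum, hcube, hae⟩ :=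
    exists_calderonZygmund_cubes (ℓ := 2 * B) (locallyIntegrable_abs_sub_const hb c₀) hh
      (hosc.trans (by gcongr; exact le_mul_of_one_le_left' one_le_two))
  refine ⟨ι, inferInstance, c, r, hr, ?_, fun i => ?_, ?_⟩
  · rw [ENNReal.le_div_iff_mul_le (.inl two_ne_zero) (.inl ENNReal.ofNat_ne_top),
      ← ENNReal.mul_le_mul_iff_right hB0 hBt]
    calc B * ((∑' i, volume (Cube n (c i) (r i))) * 2)
        = 2 * B * ∑' i, volume (Cube n (c i) (r i)) := by ring
      _ ≤ B * volume (Cube n a h) := hsum.trans hosc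
  · simpa [ENNReal.toReal_mul, pow_succ, mul_assoc] using
      abs_intAvg_sub_le hb (c i) (hr i) c₀ (by finiteness) (hcube i)
  · filter_upwards [hae] with x hx hxQ hxU
    simpa using (ENNReal.ofReal_le_iff_le_toReal (by finiteness)).1 (hx hxQ hxU)

lemma measure_superlevel_le_bmoDistribution_mul_half (hb : LocallyIntegrable b)
    (hB0 : bmoNorm n b ≠ 0) (hBt : bmoNorm n b ≠ ∞) (a : Fin n → ℝ) {h : ℝ} (hh : 0 < h)
    {t : ℝ} (ht : 0 ≤ t) :
    volume (Cube n a h ∩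
        {x | t + 2 ^ (n + 1) * (bmoNorm n b).toReal < |b x - intAvg n (Cube n a h) b|}) ≤
      bmoDistribution n b t * (volume (Cube n a h) / 2) := by
  set Q := Cube n a h
  set B := (bmoNorm n b).toReal
  set S := {x | t + 2 ^ (n + 1) * B < |b x - intAvg n Q b|}
  obtain ⟨ι, _, c, r, hr, hsum, hdev, hae⟩ :=
    exists_calderonZygmund_cubes_of_bmoNorm hb hB0 hBt a hh
  have hoff : volume ((Q ∩ S) \ ⋃ i, Cube n (c i) (r i)) = 0 := by
    refine measure_eq_zero_iff_ae_notMem.2 ?_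
    filter_upwards [hae] with x hx ⟨⟨hxQ, hxS⟩, hxU⟩
    have h2 : (2 : ℝ) ≤ 2 ^ (n + 1) := le_self_pow₀ one_le_two n.succ_ne_zero
    have : 0 ≤ B := ENNReal.toReal_nonneg
    exact absurd (hx hxQ hxU) (not_le.2 (lt_of_le_of_lt (by nlinarith) hxS))
  have hon (i : ι) : volume (Cube n (c i) (r i) ∩ S) ≤
      bmoDistribution n b t * volume (Cube n (c i) (r i)) := by
    refine (measure_mono ?_).trans (measure_le_bmoDistribution_mul (c i) (hr i) t)
    rintro x ⟨hxi, hxS⟩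
    refine ⟨hxi, ?_⟩
    have := abs_sub_le (b x) (intAvg n (Cube n (c i) (r i)) b) (intAvg n Q b)
    simp only [S, mem_ofPred_eq] at hxS ⊢
    linarith [hdev i]
  calc volume (Q ∩ S)
      ≤ volume (Q ∩ S ∩ ⋃ i, Cube n (c i) (r i)) + volume ((Q ∩ S) \ ⋃ i, Cube n (c i) (r i)) :=
        measure_le_inter_add_sdiff _ _ _
    _ ≤ ∑' i, volume (Cube n (c i) (r i) ∩ S) := by
        rw [hoff, add_zero, inter_iUnion]
        exact (measure_iUnion_le _).trans
          (ENNReal.tsum_le_tsum fun i => measure_mono fun x hx => ⟨hx.2, hx.1.2⟩)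
    _ ≤ ∑' i, bmoDistribution n b t * volume (Cube n (c i) (r i)) := ENNReal.tsum_le_tsum hon
    _ ≤ bmoDistribution n b t * (volume Q / 2) := by
        rw [ENNReal.tsum_mul_left]
        gcongr

lemma bmoDistribution_add_le_half (hb : LocallyIntegrable b) (hB0 : bmoNorm n b ≠ 0)
    (hBt : bmoNorm n b ≠ ∞) {t : ℝ} (ht : 0 ≤ t) :
    bmoDistribution n b (t + 2 ^ (n + 1) * (bmoNorm n b).toReal) ≤ bmoDistribution n b t / 2 :=
  iSup_le fun a => iSup_le fun _ => iSup_le fun hh => ENNReal.div_le_of_le_mul <|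
    (measure_superlevel_le_bmoDistribution_mul_half hb hB0 hBt a hh ht).trans_eq <| by
      rw [div_eq_mul_inv, div_eq_mul_inv]
      ring

lemma bmoDistribution_nat_mul_le (hb : LocallyIntegrable b) (hB0 : bmoNorm n b ≠ 0)
    (hBt : bmoNorm n b ≠ ∞) (k : ℕ) :
    bmoDistribution n b (k * (2 ^ (n + 1) * (bmoNorm n b).toReal)) ≤ 2⁻¹ ^ k := by
  induction k with
  | zero => simpa using bmoDistribution_le_one 0
  | succ k ih =>
    calc bmoDistribution n b ((k + 1 : ℕ) * (2 ^ (n + 1) * (bmoNorm n b).toReal))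
        = bmoDistribution n b (k * (2 ^ (n + 1) * (bmoNorm n b).toReal) +
            2 ^ (n + 1) * (bmoNorm n b).toReal) := by push_cast; ring_nf
      _ ≤ bmoDistribution n b (k * (2 ^ (n + 1) * (bmoNorm n b).toReal)) / 2 :=
          bmoDistribution_add_le_half hb hB0 hBt (by positivity)
      _ ≤ 2⁻¹ ^ (k + 1) := by
          rw [pow_succ (2⁻¹ : ℝ≥0∞), div_eq_mul_inv]
          exact mul_le_mul_left ih _

end BMO

theorem sharp_john_nirenberg_general (n : ℕ) :
    ∃ βn : ℝ, 1 < βn ∧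
      ∀ b : (Fin n → ℝ) → ℝ, LocallyIntegrable b →
        0 < bmoNorm n b → bmoNorm n b < ⊤ →
      ∀ (a : Fin n → ℝ) (h : ℝ), 0 < h →
        setAvg n (Cube n a h) (fun y =>
          Real.exp (((2 : ℝ) ^ (n + 2))⁻¹ / (bmoNorm n b).toReal *
            |b y - intAvg n (Cube n a h) b|)) ≤ ENNReal.ofReal βn := by
  refine ⟨johnNirenbergBound, one_lt_johnNirenbergBound, fun b hb hpos hlt a h hh => ?_⟩
  have hB : 0 < (bmoNorm n b).toReal := ENNReal.toReal_pos hpos.ne' hlt.ne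
  have hexp := setLIntegral_exp_le_of_superlevel_decay (measurableSet_cube a h)
    (hb.aestronglyMeasurable.aemeasurable.sub_const _).abs.restrict
    (by positivity : 0 < 2 ^ (n + 1) * (bmoNorm n b).toReal) fun k =>
      (measure_le_bmoDistribution_mul a hh _).trans
        (mul_le_mul_left (bmoDistribution_nat_mul_le hb hpos.ne' hlt.ne k) _)
  rw [setAvg, ENNReal.inv_mul_le_iff (volume_cube_ne_zero a hh) (volume_cube_ne_top a h),
    mul_comm]
  refine le_trans (le_of_eq (lintegral_congr fun y => ?_)) hexp
  rw [pow_succ 2 (n + 1)]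
  congr 2
  field_simp

/-- (Sharp John–Nirenberg inequality.) With `α_n = 2^{-(n+2)}`, there is
`β_n > 1` such that for every `b` with `0 < ‖b‖_{BMO} < ∞` and every cube `Q`,
`|Q|⁻¹ ∫_Q exp((α_n/‖b‖_{BMO}) |b - b_Q|) ≤ β_n`. -/
theorem sharp_john_nirenberg (n : ℕ) (hn : 1 ≤ n) :
    ∃ βn : ℝ, 1 < βn ∧
      ∀ b : (Fin n → ℝ) → ℝ, LocallyIntegrable b →
        0 < bmoNorm n b → bmoNorm n b < ⊤ →
      ∀ (a : Fin n → ℝ) (h : ℝ), 0 < h →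
        setAvg n (Cube n a h) (fun y =>
          Real.exp (((2 : ℝ) ^ (n + 2))⁻¹ / (bmoNorm n b).toReal *
            |b y - intAvg n (Cube n a h) b|)) ≤ ENNReal.ofReal βn :=
  sharp_john_nirenberg_general n
end
end

section
/- (Sharp reverse Hölder inequality for A₂ weights.) Let n ≥ 1 and let w be a weight on ℝ^n with w ∈ A₂. Set r_w = 1 + 1/(2^{n+5} [w]_{A₂}). Then for every cube Q ⊂ ℝ^n with sides parallel to the axes, ( |Q|⁻¹ ∫_Q w^{r_w} dx )^{1/r_w} ≤ 2 |Q|⁻¹ ∫_Q w dx. -/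
open MeasureTheory ENNReal

noncomputable section

/-!
Calderón–Zygmund decomposition of `w` on the cube `Q` at the heights `λₘ = 2^{(n+2)m} ⟨w⟩_Q`:
`Ωₘ` is the union of the maximal dyadic subcubes of `Q` on which the average of `w` exceeds `λₘ`.
Such a cube `P` has average at most `2ⁿ λₘ`, so `|Ωₘ₊₁ ∩ P| ≤ |P| / 4`. Cauchy–Schwarz gives
`|P \ Ωₘ₊₁|² ≤ w(P \ Ωₘ₊₁) σ(P)` with `σ = w⁻¹`, and the `A₂` condition `w(P) σ(P) ≤ [w]_{A₂} |P|²`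
then yields `w(Ωₘ₊₁ ∩ P) ≤ θ w(P)` with `θ = 1 - 9 / (16 [w]_{A₂})`; hence `w(Ωₘ₊₁) ≤ θ w(Ωₘ)`.
By Lebesgue differentiation `w ≤ λ₀` a.e. on `Q \ Ω₀` and `w ≤ λₘ₊₁` a.e. on `Ωₘ \ Ωₘ₊₁`, and
`⋂ Ωₘ` is null. Summing by parts,
`∫_Q w^{1+ε} ≤ λ₀^ε (w(Q \ Ω₀) + ∑ₘ 2^{(n+2)(m+1)ε} w(Ωₘ \ Ωₘ₊₁)) ≤ 2 λ₀^ε w(Q)`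
as soon as `2^{(n+2)ε} (1 + θ) ≤ 2`, which Bernoulli's inequality gives for
`ε = 1 / (2^{n+5} [w]_{A₂})`.
-/

open Set Filter Topology

namespace SharpReverseHolder

section General

theorem subset_union_iUnion_diff_union_iInter {α : Type*} (Q : Set α) (Ω : ℕ → Set α) :
    Q ⊆ (Q \ Ω 0) ∪ (⋃ m, Ω m \ Ω (m + 1)) ∪ ⋂ m, Ω m := by
  intro x hx
  by_contra hx'
  simp only [mem_union, Set.mem_sdiff, mem_iUnion, mem_iInter, not_or, not_and, not_not, not_exists,
    not_forall] at hx'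
  obtain ⟨⟨hx0, hstep⟩, m, hm⟩ := hx'
  exact hm (Nat.rec (hx0 hx) hstep m)

theorem mul_le_mul_sq_of_inv_mul_mul_inv_mul_le {V X Y C : ℝ≥0∞} (hV0 : V ≠ 0) (hV : V ≠ ⊤)
    (h : V⁻¹ * X * (V⁻¹ * Y) ≤ C) : X * Y ≤ C * V ^ 2 :=
  calc X * Y = (V⁻¹ * V) ^ 2 * (X * Y) := by rw [ENNReal.inv_mul_cancel hV0 hV]; ring
    _ = V⁻¹ * X * (V⁻¹ * Y) * V ^ 2 := by ring
    _ ≤ C * V ^ 2 := by gcongr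

theorem le_one_sub_mul_of_nine_mul_le {x y z C : ℝ≥0∞} (hz : z ≠ ⊤) (hsum : x + y = z)
    (h : 9 * z ≤ 16 * C * y) : x ≤ (1 - 9 * (16 * C)⁻¹) * z := by
  have hy : 9 * (16 * C)⁻¹ * z ≤ y := by
    rw [mul_right_comm, ← div_eq_mul_inv]
    exact ENNReal.div_le_of_le_mul (by rwa [mul_comm y])
  rw [ENNReal.sub_mul fun _ _ => hz, one_mul,
    ENNReal.eq_sub_of_add_eq (ne_top_of_le_ne_top hz (hsum ▸ le_add_self)) hsum]
  exact tsub_le_tsub_left hy z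

theorem rpow_inv_mul_le_two_mul {V I J A : ℝ≥0∞} {ε : ℝ} (hε : 0 ≤ ε) (hA : A = V⁻¹ * I)
    (hJ : J ≤ 2 * A ^ ε * I) : (V⁻¹ * J) ^ (1 / (1 + ε)) ≤ 2 * A := by
  have hpos : 0 < 1 + ε := by linarith
  calc (V⁻¹ * J) ^ (1 / (1 + ε)) ≤ ((2 * A) ^ (1 + ε)) ^ (1 / (1 + ε)) := by
        gcongr
        calc V⁻¹ * J ≤ V⁻¹ * (2 * A ^ ε * I) := by gcongr
          _ = 2 * (A ^ ε * A) := by rw [hA]; ring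
          _ = 2 ^ (1 : ℝ) * A ^ (1 + ε) := by
            rw [ENNReal.rpow_one, add_comm, ENNReal.rpow_add_of_nonneg _ _ hε zero_le_one,
              ENNReal.rpow_one]
          _ ≤ 2 ^ (1 + ε) * A ^ (1 + ε) := by gcongr <;> [norm_num; linarith]
          _ = (2 * A) ^ (1 + ε) := (ENNReal.mul_rpow_of_nonneg _ _ hpos.le).symm
    _ = 2 * A := by rw [← ENNReal.rpow_mul, mul_one_div_cancel hpos.ne', ENNReal.rpow_one]

theorem tsum_pow_succ_mul_le_two_mul {c θ : ℝ≥0∞} (hcθ : c * (1 + θ) ≤ 2) {s u : ℕ → ℝ≥0∞}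
    (hsu : ∀ m, s m = u m + s (m + 1)) (hdecay : ∀ m, s (m + 1) ≤ θ * s m) :
    ∑' m, c ^ (m + 1) * u m ≤ 2 * s 0 := by
  have partial_sum : ∀ M, ∑ m ∈ Finset.range M, c ^ (m + 1) * u m + 2 * c ^ M * s M ≤ 2 * s 0 := by
    intro M
    induction M with
    | zero => simp
    | succ M ih =>
      have step : c ^ (M + 1) * u M + 2 * c ^ (M + 1) * s (M + 1) ≤ 2 * c ^ M * s M :=
        calc c ^ (M + 1) * u M + 2 * c ^ (M + 1) * s (M + 1)
            = c ^ (M + 1) * s M + c ^ (M + 1) * s (M + 1) := by rw [hsu M]; ring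
          _ ≤ c ^ (M + 1) * s M + c ^ (M + 1) * (θ * s M) := by gcongr; exact hdecay M
          _ = c * (1 + θ) * (c ^ M * s M) := by ring
          _ ≤ 2 * c ^ M * s M := by rw [mul_assoc 2]; gcongr
      calc ∑ m ∈ Finset.range (M + 1), c ^ (m + 1) * u m + 2 * c ^ (M + 1) * s (M + 1)
          = ∑ m ∈ Finset.range M, c ^ (m + 1) * u m +
            (c ^ (M + 1) * u M + 2 * c ^ (M + 1) * s (M + 1)) := by
            rw [Finset.sum_range_succ, add_assoc]
        _ ≤ 2 * s 0 := (add_le_add_right step _).trans ih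
  rw [ENNReal.tsum_eq_iSup_nat]
  exact iSup_le fun M => le_self_add.trans (partial_sum M)

variable {α : Type*} [MeasurableSpace α] {μ : Measure α}

theorem measure_sq_le_lintegral_mul_lintegral_inv {w : α → ℝ} (hw : ∀ x, 0 < w x)
    (hwm : AEMeasurable w μ) (E : Set α) :
    μ E ^ 2 ≤ (∫⁻ x in E, ENNReal.ofReal (w x) ∂μ) * ∫⁻ x in E, ENNReal.ofReal (w x)⁻¹ ∂μ := by
  set f : α → ℝ≥0∞ := fun x => ENNReal.ofReal (w x) ^ (2⁻¹ : ℝ)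
  set g : α → ℝ≥0∞ := fun x => ENNReal.ofReal (w x)⁻¹ ^ (2⁻¹ : ℝ)
  have hfg : ∀ x, (f * g) x = 1 := fun x => by
    simp only [Pi.mul_apply, f, g]
    rw [← ENNReal.mul_rpow_of_nonneg _ _ (by norm_num), ← ENNReal.ofReal_mul (hw x).le,
      mul_inv_cancel₀ (hw x).ne', ENNReal.ofReal_one, ENNReal.one_rpow]
  have hsq : ∀ y : ℝ≥0∞, (y ^ (2⁻¹ : ℝ)) ^ (2 : ℝ) = y := fun y => by
    rw [← ENNReal.rpow_mul]; norm_num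
  have hfm : AEMeasurable f (μ.restrict E) := hwm.ennreal_ofReal.restrict.pow_const _
  have hgm : AEMeasurable g (μ.restrict E) := hwm.inv.ennreal_ofReal.restrict.pow_const _
  have holder :=
    ENNReal.lintegral_mul_le_Lp_mul_Lq (μ.restrict E) Real.HolderConjugate.two_two hfm hgm
  simp only [hfg, f, g, hsq, lintegral_one, Measure.restrict_apply_univ] at holder
  calc μ E ^ 2 ≤ ((∫⁻ x in E, ENNReal.ofReal (w x) ∂μ) ^ (1 / (2 : ℝ)) *
        (∫⁻ x in E, ENNReal.ofReal (w x)⁻¹ ∂μ) ^ (1 / (2 : ℝ))) ^ (2 : ℝ) := by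
        rw [← ENNReal.rpow_natCast]; exact ENNReal.rpow_le_rpow holder (by norm_num)
    _ = _ := by rw [ENNReal.mul_rpow_of_nonneg _ _ (by norm_num), ← ENNReal.rpow_mul,
        ← ENNReal.rpow_mul]; norm_num

theorem nine_mul_setLIntegral_le_of_volume_le_quarter {w : α → ℝ} (hw : ∀ x, 0 < w x)
    (hwm : AEMeasurable w μ) {C : ℝ≥0∞} {D E : Set α} (hE : MeasurableSet E) (hED : E ⊆ D)
    (hD : μ D ≠ ⊤)
    (hA2 : (∫⁻ x in D, ENNReal.ofReal (w x) ∂μ) * (∫⁻ x in D, ENNReal.ofReal (w x)⁻¹ ∂μ) ≤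
      C * μ D ^ 2)
    (hquarter : 4 * μ E ≤ μ D) :
    9 * ∫⁻ x in D, ENNReal.ofReal (w x) ∂μ ≤ 16 * C * ∫⁻ x in D \ E, ENNReal.ofReal (w x) ∂μ := by
  rcases eq_or_ne (μ D) 0 with hD0 | hD0
  · simp [setLIntegral_measure_zero _ _ hD0]
  set ν := ∫⁻ x in D, ENNReal.ofReal (w x) ∂μ
  set σ := ∫⁻ x in D, ENNReal.ofReal (w x)⁻¹ ∂μ
  have hsplit : μ E + μ (D \ E) = μ D := by
    rw [← measure_inter_add_sdiff D hE, inter_eq_right.2 hED]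
  have hF : 3 * μ D ≤ 4 * μ (D \ E) := by
    refine (ENNReal.add_le_add_iff_left hD).1 ?_
    calc μ D + 3 * μ D = 4 * μ E + 4 * μ (D \ E) := by rw [← mul_add, hsplit]; ring
      _ ≤ μ D + 4 * μ (D \ E) := by gcongr
  have hCS := measure_sq_le_lintegral_mul_lintegral_inv hw hwm (D \ E)
  have hσ : ∫⁻ x in D \ E, ENNReal.ofReal (w x)⁻¹ ∂μ ≤ σ := lintegral_mono_set sdiff_subset
  refine (ENNReal.mul_le_mul_iff_right (pow_ne_zero 2 hD0) (ENNReal.pow_ne_top hD)).1 ?_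
  calc μ D ^ 2 * (9 * ν) = (3 * μ D) ^ 2 * ν := by ring
    _ ≤ (4 * μ (D \ E)) ^ 2 * ν := by gcongr
    _ = 16 * (μ (D \ E) ^ 2 * ν) := by ring
    _ ≤ 16 * ((∫⁻ x in D \ E, ENNReal.ofReal (w x) ∂μ) * σ * ν) := by
        gcongr; exact hCS.trans (by gcongr)
    _ = 16 * (∫⁻ x in D \ E, ENNReal.ofReal (w x) ∂μ) * (ν * σ) := by ring
    _ ≤ 16 * (∫⁻ x in D \ E, ENNReal.ofReal (w x) ∂μ) * (C * μ D ^ 2) := by gcongr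
    _ = μ D ^ 2 * (16 * C * ∫⁻ x in D \ E, ENNReal.ofReal (w x) ∂μ) := by ring

theorem setLIntegral_le_of_volume_le_quarter {w : α → ℝ} (hw : ∀ x, 0 < w x)
    (hwm : AEMeasurable w μ) {C : ℝ≥0∞} {D E : Set α} (hE : MeasurableSet E) (hED : E ⊆ D)
    (hD : μ D ≠ ⊤) (hwD : ∫⁻ x in D, ENNReal.ofReal (w x) ∂μ ≠ ⊤)
    (hA2 : (∫⁻ x in D, ENNReal.ofReal (w x) ∂μ) * (∫⁻ x in D, ENNReal.ofReal (w x)⁻¹ ∂μ) ≤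
      C * μ D ^ 2)
    (hquarter : 4 * μ E ≤ μ D) :
    ∫⁻ x in E, ENNReal.ofReal (w x) ∂μ ≤
      (1 - 9 * (16 * C)⁻¹) * ∫⁻ x in D, ENNReal.ofReal (w x) ∂μ := by
  refine le_one_sub_mul_of_nine_mul_le hwD ?_
    (nine_mul_setLIntegral_le_of_volume_le_quarter hw hwm hE hED hD hA2 hquarter)
  rw [← lintegral_inter_add_sdiff _ D hE, inter_eq_right.2 hED]

theorem setLIntegral_rpow_le_of_ae_le {f : α → ℝ≥0∞} {S : Set α} {L : ℝ≥0∞} (hL : L ≠ ⊤)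
    {ε : ℝ} (hε : 0 ≤ ε) (hfL : ∀ᵐ x ∂μ.restrict S, f x ≤ L) :
    ∫⁻ x in S, f x ^ (1 + ε) ∂μ ≤ L ^ ε * ∫⁻ x in S, f x ∂μ := by
  rw [← lintegral_const_mul' _ _ (ENNReal.rpow_ne_top_of_nonneg hε hL)]
  refine lintegral_mono_ae (hfL.mono fun x hx => ?_)
  rw [ENNReal.rpow_add_of_nonneg _ _ zero_le_one hε, ENNReal.rpow_one, mul_comm]
  gcongr

theorem measure_eq_zero_of_setLIntegral_eq_zero {w : α → ℝ} (hw : ∀ x, 0 < w x)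
    (hwm : AEMeasurable w μ) {S : Set α} (hS : ∫⁻ x in S, ENNReal.ofReal (w x) ∂μ = 0) :
    μ S = 0 := by
  have hae := ae_iff.1 ((lintegral_eq_zero_iff' hwm.ennreal_ofReal.restrict).1 hS)
  simpa [hw] using hae

theorem setLIntegral_iInter_eq_zero_of_decay {f : α → ℝ≥0∞} {Ω : ℕ → Set α} {θ : ℝ≥0∞}
    (hθ : θ < 1) (hΩ0 : ∫⁻ x in Ω 0, f x ∂μ ≠ ⊤)
    (hdecay : ∀ m, ∫⁻ x in Ω (m + 1), f x ∂μ ≤ θ * ∫⁻ x in Ω m, f x ∂μ) :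
    ∫⁻ x in ⋂ m, Ω m, f x ∂μ = 0 := by
  have hiter : ∀ m, ∫⁻ x in Ω m, f x ∂μ ≤ θ ^ m * ∫⁻ x in Ω 0, f x ∂μ := fun m => by
    induction m with
    | zero => simp
    | succ m ih => exact (hdecay m).trans (by rw [pow_succ', mul_assoc]; gcongr)
  have hlim : Tendsto (fun m => θ ^ m * ∫⁻ x in Ω 0, f x ∂μ) atTop (𝓝 0) := by
    simpa using ENNReal.Tendsto.mul_const (ENNReal.tendsto_pow_atTop_nhds_zero_of_lt_one hθ)
      (Or.inr hΩ0)
  exact le_antisymm (ge_of_tendsto' hlim fun m =>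
    (lintegral_mono_set (iInter_subset Ω m)).trans (hiter m)) bot_le

theorem setLIntegral_rpow_le_of_levels {f : α → ℝ≥0∞} {Q : Set α} {Ω : ℕ → Set α}
    (hΩ : ∀ m, MeasurableSet (Ω m)) (hΩQ : Ω 0 ⊆ Q) (hanti : ∀ m, Ω (m + 1) ⊆ Ω m)
    (hnull : μ (⋂ m, Ω m) = 0) {A b θ : ℝ≥0∞} (hA : A ≠ ⊤) (hb : b ≠ ⊤) {ε : ℝ} (hε : 0 ≤ ε)
    (hbase : ∀ᵐ x ∂μ.restrict (Q \ Ω 0), f x ≤ A)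
    (hlevel : ∀ m, ∀ᵐ x ∂μ.restrict (Ω m \ Ω (m + 1)), f x ≤ b ^ (m + 1) * A)
    (hdecay : ∀ m, ∫⁻ x in Ω (m + 1), f x ∂μ ≤ θ * ∫⁻ x in Ω m, f x ∂μ)
    (hbθ : b ^ ε * (1 + θ) ≤ 2) :
    ∫⁻ x in Q, f x ^ (1 + ε) ∂μ ≤ 2 * A ^ ε * ∫⁻ x in Q, f x ∂μ := by
  set ν : Set α → ℝ≥0∞ := fun S => ∫⁻ x in S, f x ∂μ
  have hlevel_rpow : ∀ m, (b ^ (m + 1) * A) ^ ε = (b ^ ε) ^ (m + 1) * A ^ ε := fun m => by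
    rw [ENNReal.mul_rpow_of_ne_top (ENNReal.pow_ne_top hb) hA, ← ENNReal.rpow_natCast,
      ← ENNReal.rpow_natCast, ← ENNReal.rpow_mul, ← ENNReal.rpow_mul, mul_comm ε]
  have hsplit : ∀ m, ν (Ω m) = ν (Ω m \ Ω (m + 1)) + ν (Ω (m + 1)) := fun m => by
    simp only [ν]
    rw [add_comm, ← lintegral_inter_add_sdiff _ _ (hΩ (m + 1)), inter_eq_right.2 (hanti m)]
  have hQ : ν (Q \ Ω 0) + ν (Ω 0) = ν Q := by
    simp only [ν]
    rw [add_comm, ← lintegral_inter_add_sdiff _ Q (hΩ 0), inter_eq_right.2 hΩQ]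
  have hseries := tsum_pow_succ_mul_le_two_mul hbθ hsplit hdecay
  calc ∫⁻ x in Q, f x ^ (1 + ε) ∂μ
      ≤ ∫⁻ x in (Q \ Ω 0) ∪ (⋃ m, Ω m \ Ω (m + 1)) ∪ ⋂ m, Ω m, f x ^ (1 + ε) ∂μ :=
        lintegral_mono_set (subset_union_iUnion_diff_union_iInter Q Ω)
    _ ≤ ∫⁻ x in Q \ Ω 0, f x ^ (1 + ε) ∂μ +
          ∑' m, ∫⁻ x in Ω m \ Ω (m + 1), f x ^ (1 + ε) ∂μ := by
        refine (lintegral_union_le _ _ _).trans ?_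
        rw [setLIntegral_measure_zero _ _ hnull, add_zero]
        exact (lintegral_union_le _ _ _).trans (by gcongr; exact lintegral_iUnion_le _ _)
    _ ≤ A ^ ε * ν (Q \ Ω 0) + ∑' m, (b ^ ε) ^ (m + 1) * A ^ ε * ν (Ω m \ Ω (m + 1)) := by
        gcongr with m
        · exact setLIntegral_rpow_le_of_ae_le hA hε hbase
        · rw [← hlevel_rpow]
          exact setLIntegral_rpow_le_of_ae_le (by finiteness) hε (hlevel m)
    _ = A ^ ε * (ν (Q \ Ω 0) + ∑' m, (b ^ ε) ^ (m + 1) * ν (Ω m \ Ω (m + 1))) := by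
        rw [mul_add, ← ENNReal.tsum_mul_left]
        simp only [mul_right_comm _ (A ^ ε), mul_comm (A ^ ε)]
    _ ≤ A ^ ε * (ν (Q \ Ω 0) + ν (Ω 0) + ν Q) := by
        rw [add_assoc]; gcongr
        exact hseries.trans (by rw [two_mul]; gcongr; exact lintegral_mono_set hΩQ)
    _ = 2 * A ^ ε * ν Q := by rw [hQ]; ring

end General

section DyadicGrid

variable {n : ℕ} {a : Fin n → ℝ} {h : ℝ}

def dyadicSide (h : ℝ) (k : ℕ) : ℝ := h / 2 ^ k

def dyadicCorner (a : Fin n → ℝ) (h : ℝ) (k : ℕ) (j : Fin n → ℕ) : Fin n → ℝ :=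
  fun i => a i + j i * dyadicSide h k

-- Half-open, so that the boxes of one generation are pairwise disjoint.
def dyadicBox (a : Fin n → ℝ) (h : ℝ) (k : ℕ) (j : Fin n → ℕ) : Set (Fin n → ℝ) :=
  univ.pi fun i => Ico (dyadicCorner a h k j i) (dyadicCorner a h k j i + dyadicSide h k)

def dyadicIndex (a : Fin n → ℝ) (h : ℝ) (k : ℕ) (x : Fin n → ℝ) : Fin n → ℕ :=
  fun i => ⌊(x i - a i) / dyadicSide h k⌋₊

theorem dyadicSide_pos (hh : 0 < h) (k : ℕ) : 0 < dyadicSide h k := by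
  unfold dyadicSide; positivity

theorem mem_dyadicBox_iff (hh : 0 < h) {k : ℕ} {j : Fin n → ℕ} {x : Fin n → ℝ} :
    x ∈ dyadicBox a h k j ↔ (∀ i, a i ≤ x i) ∧ dyadicIndex a h k x = j := by
  have hs := dyadicSide_pos hh k
  simp only [dyadicBox, dyadicCorner, dyadicIndex, Set.mem_pi, mem_univ, true_implies, mem_Ico,
    funext_iff, ← forall_and]
  refine forall_congr' fun i => ⟨fun ⟨hl, hr⟩ => ?_, fun ⟨ha, hj⟩ => ?_⟩
  · have ha : a i ≤ x i := by linarith [mul_nonneg (j i).cast_nonneg hs.le]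
    refine ⟨ha, (Nat.floor_eq_iff (div_nonneg (sub_nonneg.2 ha) hs.le)).2 ⟨?_, ?_⟩⟩
    · rw [le_div_iff₀ hs]; linarith
    · rw [div_lt_iff₀ hs]; linarith
  · rw [Nat.floor_eq_iff (div_nonneg (sub_nonneg.2 ha) hs.le), le_div_iff₀ hs,
      div_lt_iff₀ hs] at hj
    constructor <;> linarith

theorem dyadicIndex_eq_div (a : Fin n → ℝ) (h : ℝ) (k d : ℕ) (x : Fin n → ℝ) :
    dyadicIndex a h k x = fun i => dyadicIndex a h (k + d) x i / 2 ^ d := by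
  funext i
  simp only [dyadicIndex, dyadicSide, ← Nat.floor_div_natCast]
  congr 1
  push_cast
  rw [pow_add]
  field_simp

theorem dyadicIndex_eq_div_of_le {k k' : ℕ} (hkk : k ≤ k') (x : Fin n → ℝ) :
    dyadicIndex a h k x = fun i => dyadicIndex a h k' x i / 2 ^ (k' - k) := by
  obtain ⟨d, rfl⟩ := Nat.exists_eq_add_of_le hkk
  rw [Nat.add_sub_cancel_left]
  exact dyadicIndex_eq_div a h k d x

theorem dyadicBox_subset_ancestor (hh : 0 < h) (k d : ℕ) (j : Fin n → ℕ) :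
    dyadicBox a h (k + d) j ⊆ dyadicBox a h k fun i => j i / 2 ^ d := by
  intro x hx
  rw [mem_dyadicBox_iff hh] at hx ⊢
  exact ⟨hx.1, hx.2 ▸ dyadicIndex_eq_div a h k d x⟩

theorem mem_dyadicBox_dyadicIndex (hh : 0 < h) {x : Fin n → ℝ}
    (hx : x ∈ dyadicBox a h 0 0) (k : ℕ) : x ∈ dyadicBox a h k (dyadicIndex a h k x) :=
  (mem_dyadicBox_iff hh).2 ⟨((mem_dyadicBox_iff hh).1 hx).1, rfl⟩

theorem dyadicIndex_lt (hh : 0 < h) {x : Fin n → ℝ} (hx : x ∈ dyadicBox a h 0 0) (k : ℕ)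
    (i : Fin n) : dyadicIndex a h k x i < 2 ^ k := by
  have h0 := congrFun ((mem_dyadicBox_iff hh).1 hx).2 i
  rw [dyadicIndex_eq_div a h 0 k, zero_add] at h0
  exact (Nat.div_eq_zero_iff_lt (by positivity)).1 h0

theorem dyadicBox_subset_base (hh : 0 < h) {k : ℕ} {j : Fin n → ℕ} (hj : ∀ i, j i < 2 ^ k) :
    dyadicBox a h k j ⊆ dyadicBox a h 0 0 := by
  have hanc := dyadicBox_subset_ancestor (a := a) hh 0 k j
  simp only [zero_add, Nat.div_eq_of_lt (hj _)] at hanc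
  exact hanc

theorem dyadicBox_nested (hh : 0 < h) {k k' : ℕ} (hkk : k ≤ k') {j j' : Fin n → ℕ}
    {x : Fin n → ℝ} (hx : x ∈ dyadicBox a h k j) (hx' : x ∈ dyadicBox a h k' j') :
    j = (fun i => j' i / 2 ^ (k' - k)) ∧ dyadicBox a h k' j' ⊆ dyadicBox a h k j := by
  rw [mem_dyadicBox_iff hh] at hx hx'
  have hj : j = fun i => j' i / 2 ^ (k' - k) := by
    rw [← hx.2, ← hx'.2]; exact dyadicIndex_eq_div_of_le hkk x
  refine ⟨hj, ?_⟩
  obtain ⟨d, rfl⟩ := Nat.exists_eq_add_of_le hkk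
  rw [hj, Nat.add_sub_cancel_left]
  exact dyadicBox_subset_ancestor hh k d j'

end DyadicGrid

section Cubes

variable {n : ℕ} {a : Fin n → ℝ} {h : ℝ}

theorem cube_eq_pi (c : Fin n → ℝ) (δ : ℝ) :
    Cube n c δ = univ.pi fun i => Icc (c i) (c i + δ) := by
  ext x
  simp only [Cube, Set.mem_pi, mem_univ, true_implies, mem_Icc, mem_ofPred_eq]

theorem measurableSet_dyadicBox (k : ℕ) (j : Fin n → ℕ) : MeasurableSet (dyadicBox a h k j) :=
  .univ_pi fun _ => measurableSet_Ico

theorem dyadicBox_ae_eq_cube (k : ℕ) (j : Fin n → ℕ) :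
    dyadicBox a h k j =ᵐ[volume] Cube n (dyadicCorner a h k j) (dyadicSide h k) := by
  rw [cube_eq_pi]
  exact Measure.pi_Ico_ae_eq_pi_Icc

theorem volume_cube (c : Fin n → ℝ) (δ : ℝ) : volume (Cube n c δ) = ENNReal.ofReal δ ^ n := by
  rw [cube_eq_pi, volume_pi_pi]
  simp

theorem volume_cube_ne_zero {δ : ℝ} (hδ : 0 < δ) (c : Fin n → ℝ) : volume (Cube n c δ) ≠ 0 := by
  simp [volume_cube, hδ]

theorem volume_cube_ne_top (c : Fin n → ℝ) (δ : ℝ) : volume (Cube n c δ) ≠ ⊤ := by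
  simp [volume_cube]

theorem volume_dyadicBox_eq_volume_cube (k : ℕ) (j : Fin n → ℕ) :
    volume (dyadicBox a h k j) = volume (Cube n (dyadicCorner a h k j) (dyadicSide h k)) :=
  measure_congr (dyadicBox_ae_eq_cube k j)

theorem volume_dyadicBox (k : ℕ) (j : Fin n → ℕ) :
    volume (dyadicBox a h k j) = ENNReal.ofReal (dyadicSide h k) ^ n := by
  rw [volume_dyadicBox_eq_volume_cube, volume_cube]

theorem volume_dyadicBox_ne_zero (hh : 0 < h) (k : ℕ) (j : Fin n → ℕ) :
    volume (dyadicBox a h k j) ≠ 0 := by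
  rw [volume_dyadicBox_eq_volume_cube]; exact volume_cube_ne_zero (dyadicSide_pos hh k) _

theorem volume_dyadicBox_ne_top (k : ℕ) (j : Fin n → ℕ) : volume (dyadicBox a h k j) ≠ ⊤ := by
  rw [volume_dyadicBox_eq_volume_cube]; exact volume_cube_ne_top _ _

theorem volume_dyadicBox_ancestor (hh : 0 < h) (k : ℕ) (j : Fin n → ℕ) :
    volume (dyadicBox a h k fun i => j i / 2) = 2 ^ n * volume (dyadicBox a h (k + 1) j) := by
  have hside : dyadicSide h k = 2 * dyadicSide h (k + 1) := by
    unfold dyadicSide; rw [pow_succ]; field_simp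
  rw [volume_dyadicBox, volume_dyadicBox, hside, ENNReal.ofReal_mul zero_le_two, mul_pow,
    ENNReal.ofReal_ofNat]

theorem cube_eq_cube_dyadicCorner_zero (a : Fin n → ℝ) (h : ℝ) :
    Cube n a h = Cube n (dyadicCorner a h 0 0) (dyadicSide h 0) := by
  have ha : dyadicCorner a h 0 0 = a := funext fun i => by simp [dyadicCorner]
  simp [ha, dyadicSide]

theorem isCompact_cube (c : Fin n → ℝ) (δ : ℝ) : IsCompact (Cube n c δ) := by
  rw [cube_eq_pi]; exact isCompact_univ_pi fun _ => isCompact_Icc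

theorem closedBall_eq_cube (c : Fin n → ℝ) {δ : ℝ} (hδ : 0 ≤ δ) :
    Metric.closedBall (fun i => c i + δ / 2) (δ / 2) = Cube n c δ := by
  ext y
  rw [Metric.mem_closedBall, dist_pi_le_iff (by positivity)]
  simp only [Real.dist_eq, abs_le, Cube, mem_ofPred_eq]
  refine forall_congr' fun i => ?_
  constructor <;> intro h <;> constructor <;> linarith [h.1, h.2]

theorem dyadicBox_subset_cube (k : ℕ) (j : Fin n → ℕ) :
    dyadicBox a h k j ⊆ Cube n (dyadicCorner a h k j) (dyadicSide h k) := by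
  rw [cube_eq_pi]
  exact pi_mono fun _ _ => Ico_subset_Icc_self

end Cubes

section A2

variable {n : ℕ} {w : (Fin n → ℝ) → ℝ}

theorem lintegral_mul_lintegral_inv_le_A2const {δ : ℝ} (hδ : 0 < δ) (c : Fin n → ℝ) :
    (∫⁻ x in Cube n c δ, ENNReal.ofReal (w x)) * (∫⁻ x in Cube n c δ, ENNReal.ofReal (w x)⁻¹) ≤
      A2const n w * volume (Cube n c δ) ^ 2 := by
  refine mul_le_mul_sq_of_inv_mul_mul_inv_mul_le (volume_cube_ne_zero hδ c)
    (volume_cube_ne_top c δ) ?_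
  exact le_iSup₂_of_le (f := fun c δ => ⨆ (_ : 0 < δ), _) c δ (le_iSup_of_le hδ le_rfl)

theorem lintegral_mul_lintegral_inv_le_A2const_dyadicBox {a : Fin n → ℝ} {h : ℝ} (hh : 0 < h)
    (k : ℕ) (j : Fin n → ℕ) :
    (∫⁻ x in dyadicBox a h k j, ENNReal.ofReal (w x)) *
        (∫⁻ x in dyadicBox a h k j, ENNReal.ofReal (w x)⁻¹) ≤
      A2const n w * volume (dyadicBox a h k j) ^ 2 := by
  simp only [setLIntegral_congr (dyadicBox_ae_eq_cube k j), volume_dyadicBox_eq_volume_cube]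
  exact lintegral_mul_lintegral_inv_le_A2const (dyadicSide_pos hh k) _

theorem one_le_A2const (hw : ∀ x, 0 < w x) (hwm : AEMeasurable w) {h : ℝ} (hh : 0 < h)
    (a : Fin n → ℝ) : 1 ≤ A2const n w := by
  have hV0 := pow_ne_zero 2 (volume_cube_ne_zero hh a)
  have hV : volume (Cube n a h) ^ 2 ≠ ⊤ := ENNReal.pow_ne_top (volume_cube_ne_top a h)
  refine (ENNReal.mul_le_mul_iff_left hV0 hV).1 ?_
  rw [one_mul]
  exact (measure_sq_le_lintegral_mul_lintegral_inv hw hwm _).trans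
    (lintegral_mul_lintegral_inv_le_A2const hh a)

end A2

section CalderonZygmund

variable {n : ℕ} {w : (Fin n → ℝ) → ℝ} {a : Fin n → ℝ} {h : ℝ}

def dyadicAvg (w : (Fin n → ℝ) → ℝ) (a : Fin n → ℝ) (h : ℝ) (k : ℕ) (j : Fin n → ℕ) : ℝ≥0∞ :=
  (volume (dyadicBox a h k j))⁻¹ * ∫⁻ x in dyadicBox a h k j, ENNReal.ofReal (w x)

/-- The maximal dyadic subboxes of `dyadicBox a h 0 0` on which the average of `w` exceeds `t`;
their union `czSet` is the Calderón–Zygmund set at height `t`. -/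
def stoppingBoxes (w : (Fin n → ℝ) → ℝ) (a : Fin n → ℝ) (h : ℝ) (t : ℝ≥0∞) :
    Set (ℕ × (Fin n → ℕ)) :=
  {p | (∀ i, p.2 i < 2 ^ p.1) ∧ t < dyadicAvg w a h p.1 p.2 ∧
    ∀ k < p.1, dyadicAvg w a h k (fun i => p.2 i / 2 ^ (p.1 - k)) ≤ t}

def czSet (w : (Fin n → ℝ) → ℝ) (a : Fin n → ℝ) (h : ℝ) (t : ℝ≥0∞) : Set (Fin n → ℝ) :=
  ⋃ p ∈ stoppingBoxes w a h t, dyadicBox a h p.1 p.2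

theorem dyadicAvg_mul_volume (hh : 0 < h) (k : ℕ) (j : Fin n → ℕ) :
    dyadicAvg w a h k j * volume (dyadicBox a h k j) =
      ∫⁻ x in dyadicBox a h k j, ENNReal.ofReal (w x) := by
  rw [dyadicAvg, mul_right_comm, ENNReal.inv_mul_cancel (volume_dyadicBox_ne_zero hh k j)
    (volume_dyadicBox_ne_top k j), one_mul]

theorem dyadicAvg_succ_le (hh : 0 < h) (k : ℕ) (j : Fin n → ℕ) :
    dyadicAvg w a h (k + 1) j ≤ 2 ^ n * dyadicAvg w a h k (fun i => j i / 2) := by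
  have hsub := dyadicBox_subset_ancestor (a := a) hh k 1 j
  rw [pow_one] at hsub
  calc dyadicAvg w a h (k + 1) j
      ≤ (volume (dyadicBox a h (k + 1) j))⁻¹ *
          ∫⁻ x in dyadicBox a h k (fun i => j i / 2), ENNReal.ofReal (w x) := by
        unfold dyadicAvg; gcongr
    _ = 2 ^ n * dyadicAvg w a h k (fun i => j i / 2) := by
        rw [dyadicAvg, volume_dyadicBox_ancestor hh, ENNReal.mul_inv (by simp) (by simp),
          ← mul_assoc, ← mul_assoc, ENNReal.mul_inv_cancel (by simp) (by simp), one_mul]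

theorem dyadicAvg_le_of_mem_stoppingBoxes (hh : 0 < h) {t : ℝ≥0∞}
    (ht : dyadicAvg w a h 0 0 ≤ t) {p : ℕ × (Fin n → ℕ)} (hp : p ∈ stoppingBoxes w a h t) :
    dyadicAvg w a h p.1 p.2 ≤ 2 ^ n * t := by
  obtain ⟨⟨k, j⟩, hvalid, hgt, hstop⟩ := p, hp
  obtain _ | k := k
  · have hj : j = 0 := funext fun i => Nat.lt_one_iff.1 (hvalid i)
    exact absurd (hj ▸ ht) hgt.not_ge
  · have hparent := hstop k (Nat.lt_succ_self k)
    rw [Nat.add_sub_cancel_left, pow_one] at hparent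
    exact (dyadicAvg_succ_le hh k j).trans (by gcongr)

theorem measurableSet_czSet (t : ℝ≥0∞) : MeasurableSet (czSet w a h t) :=
  .biUnion (to_countable _) fun _ _ => measurableSet_dyadicBox _ _

theorem czSet_subset_base (hh : 0 < h) (t : ℝ≥0∞) : czSet w a h t ⊆ dyadicBox a h 0 0 :=
  iUnion₂_subset fun _ hp => dyadicBox_subset_base hh hp.1

theorem mem_czSet_iff (hh : 0 < h) {t : ℝ≥0∞} {x : Fin n → ℝ} :
    x ∈ czSet w a h t ↔
      x ∈ dyadicBox a h 0 0 ∧ ∃ k, t < dyadicAvg w a h k (dyadicIndex a h k x) := by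
  constructor
  · intro hx
    obtain ⟨p, hp, hxp⟩ := mem_iUnion₂.1 hx
    refine ⟨dyadicBox_subset_base hh hp.1 hxp, p.1, ?_⟩
    rw [((mem_dyadicBox_iff hh).1 hxp).2]
    exact hp.2.1
  · rintro ⟨hx, hk⟩
    classical
    refine mem_iUnion₂.2 ⟨(Nat.find hk, dyadicIndex a h (Nat.find hk) x),
      ⟨dyadicIndex_lt hh hx _, Nat.find_spec hk, fun k hlt => ?_⟩,
      mem_dyadicBox_dyadicIndex hh hx _⟩
    rw [← dyadicIndex_eq_div_of_le hlt.le]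
    exact not_lt.1 (Nat.find_min hk hlt)

theorem czSet_anti (hh : 0 < h) {t t' : ℝ≥0∞} (htt : t ≤ t') :
    czSet w a h t' ⊆ czSet w a h t := by
  intro x hx
  rw [mem_czSet_iff hh] at hx ⊢
  obtain ⟨hx, k, hk⟩ := hx
  exact ⟨hx, k, htt.trans_lt hk⟩

theorem stoppingBoxes_nested (hh : 0 < h) {t t' : ℝ≥0∞} (htt : t ≤ t')
    {p q : ℕ × (Fin n → ℕ)} (hp : p ∈ stoppingBoxes w a h t) (hq : q ∈ stoppingBoxes w a h t')
    {x : Fin n → ℝ} (hxp : x ∈ dyadicBox a h p.1 p.2) (hxq : x ∈ dyadicBox a h q.1 q.2) :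
    p.1 ≤ q.1 ∧ dyadicBox a h q.1 q.2 ⊆ dyadicBox a h p.1 p.2 := by
  have hpq : p.1 ≤ q.1 := by
    by_contra! hlt
    have hanc := hp.2.2 q.1 hlt
    rw [← (dyadicBox_nested hh hlt.le hxq hxp).1] at hanc
    exact (htt.trans_lt hq.2.1).not_ge hanc
  exact ⟨hpq, (dyadicBox_nested hh hpq hxp hxq).2⟩

theorem stoppingBoxes_pairwiseDisjoint (hh : 0 < h) (t : ℝ≥0∞) :
    (stoppingBoxes w a h t).PairwiseDisjoint fun p => dyadicBox a h p.1 p.2 := by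
  intro p hp q hq hne
  refine Set.disjoint_left.2 fun x hxp hxq => hne ?_
  have hk := le_antisymm (stoppingBoxes_nested hh le_rfl hp hq hxp hxq).1
    (stoppingBoxes_nested hh le_rfl hq hp hxq hxp).1
  rw [mem_dyadicBox_iff hh] at hxp hxq
  exact Prod.ext hk (hxp.2.symm.trans (hk ▸ hxq.2))

theorem measure_inter_czSet (μ : Measure (Fin n → ℝ)) (hh : 0 < h) (t : ℝ≥0∞)
    {S : Set (Fin n → ℝ)} (hS : MeasurableSet S) :
    μ (S ∩ czSet w a h t) = ∑' p : stoppingBoxes w a h t, μ (S ∩ dyadicBox a h p.1.1 p.1.2) := by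
  rw [czSet, inter_iUnion₂]
  exact measure_biUnion (to_countable _)
    ((stoppingBoxes_pairwiseDisjoint hh t).mono fun _ => inter_subset_right)
    fun p _ => hS.inter (measurableSet_dyadicBox _ _)

end CalderonZygmund

section QuarterEstimate

variable {n : ℕ} {w : (Fin n → ℝ) → ℝ} {a : Fin n → ℝ} {h : ℝ}

theorem mul_volume_le_setLIntegral_of_le_dyadicAvg (hh : 0 < h) {t : ℝ≥0∞} {k : ℕ}
    {j : Fin n → ℕ} (ht : t ≤ dyadicAvg w a h k j) :
    t * volume (dyadicBox a h k j) ≤ ∫⁻ x in dyadicBox a h k j, ENNReal.ofReal (w x) := by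
  rw [← dyadicAvg_mul_volume hh]; gcongr

theorem setLIntegral_le_mul_volume_of_dyadicAvg_le (hh : 0 < h) {t : ℝ≥0∞} {k : ℕ}
    {j : Fin n → ℕ} (ht : dyadicAvg w a h k j ≤ t) :
    ∫⁻ x in dyadicBox a h k j, ENNReal.ofReal (w x) ≤ t * volume (dyadicBox a h k j) := by
  rw [← dyadicAvg_mul_volume hh]; gcongr

theorem mul_volume_inter_czSet_le (hh : 0 < h) {t t' : ℝ≥0∞} (htt : t ≤ t')
    {p : ℕ × (Fin n → ℕ)} (hp : p ∈ stoppingBoxes w a h t) :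
    t' * volume (dyadicBox a h p.1 p.2 ∩ czSet w a h t') ≤
      ∫⁻ x in dyadicBox a h p.1 p.2, ENNReal.ofReal (w x) := by
  set ν := volume.withDensity fun x => ENNReal.ofReal (w x)
  have hP := measurableSet_dyadicBox (a := a) (h := h) p.1 p.2
  have hterm : ∀ q ∈ stoppingBoxes w a h t', t' * volume (dyadicBox a h p.1 p.2 ∩
      dyadicBox a h q.1 q.2) ≤ ν (dyadicBox a h p.1 p.2 ∩ dyadicBox a h q.1 q.2) := by
    intro q hq
    obtain hpq | ⟨x, hxp, hxq⟩ :=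
      (dyadicBox a h p.1 p.2 ∩ dyadicBox a h q.1 q.2).eq_empty_or_nonempty
    · simp [hpq]
    rw [inter_eq_right.2 (stoppingBoxes_nested hh htt hp hq hxp hxq).2,
      withDensity_apply _ (measurableSet_dyadicBox _ _)]
    exact mul_volume_le_setLIntegral_of_le_dyadicAvg hh hq.2.1.le
  calc t' * volume (dyadicBox a h p.1 p.2 ∩ czSet w a h t')
      = ∑' q : stoppingBoxes w a h t',
          t' * volume (dyadicBox a h p.1 p.2 ∩ dyadicBox a h q.1.1 q.1.2) := by
        rw [measure_inter_czSet volume hh t' hP, ENNReal.tsum_mul_left]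
    _ ≤ ∑' q : stoppingBoxes w a h t', ν (dyadicBox a h p.1 p.2 ∩ dyadicBox a h q.1.1 q.1.2) :=
        ENNReal.tsum_le_tsum fun q => hterm q q.2
    _ = ν (dyadicBox a h p.1 p.2 ∩ czSet w a h t') := (measure_inter_czSet ν hh t' hP).symm
    _ ≤ ν (dyadicBox a h p.1 p.2) := measure_mono inter_subset_left
    _ = ∫⁻ x in dyadicBox a h p.1 p.2, ENNReal.ofReal (w x) := withDensity_apply _ hP

/-- This is where the ratio `2 ^ (n + 2)` between consecutive heights comes from: a stopping box
at height `t` has average at most `2 ^ n * t`. -/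
theorem four_mul_volume_inter_czSet_le (hh : 0 < h) {t : ℝ≥0∞} (ht : dyadicAvg w a h 0 0 ≤ t)
    (ht0 : t ≠ 0) (htop : t ≠ ⊤) {p : ℕ × (Fin n → ℕ)} (hp : p ∈ stoppingBoxes w a h t) :
    4 * volume (dyadicBox a h p.1 p.2 ∩ czSet w a h (2 ^ (n + 2) * t)) ≤
      volume (dyadicBox a h p.1 p.2) := by
  have htt : t ≤ 2 ^ (n + 2) * t := le_mul_of_one_le_left' (one_le_pow₀ one_le_two)
  have hc0 : (2 : ℝ≥0∞) ^ n * t ≠ 0 := mul_ne_zero (by simp) ht0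
  have hctop : (2 : ℝ≥0∞) ^ n * t ≠ ⊤ := by finiteness
  refine (ENNReal.mul_le_mul_iff_right hc0 hctop).1 ?_
  calc 2 ^ n * t * (4 * volume (dyadicBox a h p.1 p.2 ∩ czSet w a h (2 ^ (n + 2) * t)))
      = 2 ^ (n + 2) * t * volume (dyadicBox a h p.1 p.2 ∩ czSet w a h (2 ^ (n + 2) * t)) := by
        ring
    _ ≤ ∫⁻ x in dyadicBox a h p.1 p.2, ENNReal.ofReal (w x) := mul_volume_inter_czSet_le hh htt hp
    _ ≤ 2 ^ n * t * volume (dyadicBox a h p.1 p.2) :=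
        setLIntegral_le_mul_volume_of_dyadicAvg_le hh (dyadicAvg_le_of_mem_stoppingBoxes hh ht hp)

end QuarterEstimate

section Levels

variable {n : ℕ} {w : (Fin n → ℝ) → ℝ} {a : Fin n → ℝ} {h : ℝ}

def czLevel (w : (Fin n → ℝ) → ℝ) (a : Fin n → ℝ) (h : ℝ) (m : ℕ) : ℝ≥0∞ :=
  (2 ^ (n + 2)) ^ m * dyadicAvg w a h 0 0

theorem setLIntegral_dyadicBox_ne_top (hloc : LocallyIntegrable w) (k : ℕ) (j : Fin n → ℕ) :
    ∫⁻ x in dyadicBox a h k j, ENNReal.ofReal (w x) ≠ ⊤ := by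
  rw [setLIntegral_congr (dyadicBox_ae_eq_cube k j)]
  exact ((hloc.integrableOn_isCompact (isCompact_cube _ _)).lintegral_lt_top).ne

theorem dyadicAvg_ne_zero (hw : ∀ x, 0 < w x) (hwm : AEMeasurable w) (hh : 0 < h) (k : ℕ)
    (j : Fin n → ℕ) : dyadicAvg w a h k j ≠ 0 :=
  mul_ne_zero (ENNReal.inv_ne_zero.2 (volume_dyadicBox_ne_top k j))
    fun h0 => volume_dyadicBox_ne_zero hh k j (measure_eq_zero_of_setLIntegral_eq_zero hw hwm h0)

theorem dyadicAvg_ne_top (hloc : LocallyIntegrable w) (hh : 0 < h) (k : ℕ) (j : Fin n → ℕ) :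
    dyadicAvg w a h k j ≠ ⊤ :=
  ENNReal.mul_ne_top (ENNReal.inv_ne_top.2 (volume_dyadicBox_ne_zero hh k j))
    (setLIntegral_dyadicBox_ne_top hloc k j)

theorem czLevel_succ (m : ℕ) : czLevel w a h (m + 1) = 2 ^ (n + 2) * czLevel w a h m := by
  rw [czLevel, czLevel, pow_succ']; ring

theorem dyadicAvg_le_czLevel (m : ℕ) : dyadicAvg w a h 0 0 ≤ czLevel w a h m :=
  le_mul_of_one_le_left' (one_le_pow₀ (one_le_pow₀ one_le_two))

theorem czSet_czLevel_succ_subset (hh : 0 < h) (m : ℕ) :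
    czSet w a h (czLevel w a h (m + 1)) ⊆ czSet w a h (czLevel w a h m) :=
  czSet_anti hh (czLevel_succ (w := w) (a := a) (h := h) m ▸
    le_mul_of_one_le_left' (one_le_pow₀ one_le_two))

theorem setLIntegral_czSet_czLevel_succ_le (hw : ∀ x, 0 < w x) (hloc : LocallyIntegrable w)
    (hh : 0 < h) (m : ℕ) :
    ∫⁻ x in czSet w a h (czLevel w a h (m + 1)), ENNReal.ofReal (w x) ≤
      (1 - 9 * (16 * A2const n w)⁻¹) *
        ∫⁻ x in czSet w a h (czLevel w a h m), ENNReal.ofReal (w x) := by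
  have hwm : AEMeasurable w := hloc.aestronglyMeasurable.aemeasurable
  set θ := 1 - 9 * (16 * A2const n w)⁻¹
  set ν := volume.withDensity fun x => ENNReal.ofReal (w x)
  set Ω := czSet w a h (czLevel w a h m)
  set Ω' := czSet w a h (czLevel w a h (m + 1))
  have hΩ' : MeasurableSet Ω' := measurableSet_czSet _
  have hbox : ∀ p ∈ stoppingBoxes w a h (czLevel w a h m),
      ν (Ω' ∩ dyadicBox a h p.1 p.2) ≤ θ * ν (dyadicBox a h p.1 p.2) := by
    intro p hp
    have hP := measurableSet_dyadicBox (a := a) (h := h) p.1 p.2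
    rw [withDensity_apply _ (hΩ'.inter hP), withDensity_apply _ hP, inter_comm]
    refine setLIntegral_le_of_volume_le_quarter hw hwm (hP.inter hΩ') inter_subset_left
      (volume_dyadicBox_ne_top _ _) (setLIntegral_dyadicBox_ne_top hloc _ _)
      (lintegral_mul_lintegral_inv_le_A2const_dyadicBox hh _ _) ?_
    rw [show Ω' = _ from congrArg (czSet w a h) (czLevel_succ m)]
    exact four_mul_volume_inter_czSet_le hh (dyadicAvg_le_czLevel m)
      (mul_ne_zero (by simp) (dyadicAvg_ne_zero hw hwm hh 0 0))
      (ENNReal.mul_ne_top (by simp) (dyadicAvg_ne_top hloc hh 0 0)) hp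
  rw [← withDensity_apply _ hΩ', ← withDensity_apply _ (measurableSet_czSet _)]
  calc ν Ω' = ν (Ω' ∩ Ω) := by rw [inter_eq_left.2 (czSet_czLevel_succ_subset hh m)]
    _ = ∑' p : stoppingBoxes w a h (czLevel w a h m), ν (Ω' ∩ dyadicBox a h p.1.1 p.1.2) :=
        measure_inter_czSet ν hh _ hΩ'
    _ ≤ ∑' p : stoppingBoxes w a h (czLevel w a h m),
          θ * ν (univ ∩ dyadicBox a h p.1.1 p.1.2) := by
        simp only [univ_inter]
        exact ENNReal.tsum_le_tsum fun p => hbox p p.2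
    _ = θ * ν Ω := by
        rw [ENNReal.tsum_mul_left, ← measure_inter_czSet ν hh _ .univ, univ_inter]

theorem volume_iInter_czSet_czLevel (hw : ∀ x, 0 < w x) (hloc : LocallyIntegrable w)
    (hh : 0 < h) (hA2 : A2const n w ≠ ⊤) :
    volume (⋂ m, czSet w a h (czLevel w a h m)) = 0 := by
  have hwm : AEMeasurable w := hloc.aestronglyMeasurable.aemeasurable
  have hθ : 1 - 9 * (16 * A2const n w)⁻¹ < 1 :=
    ENNReal.sub_lt_self one_ne_top one_ne_zero (by simpa using ENNReal.mul_ne_top (by simp) hA2)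
  refine measure_eq_zero_of_setLIntegral_eq_zero hw hwm
    (setLIntegral_iInter_eq_zero_of_decay hθ ?_ (setLIntegral_czSet_czLevel_succ_le hw hloc hh))
  exact ne_top_of_le_ne_top (setLIntegral_dyadicBox_ne_top hloc 0 0)
    (lintegral_mono_set (czSet_subset_base hh _))

end Levels

section Differentiation

variable {n : ℕ} {w : (Fin n → ℝ) → ℝ} {a : Fin n → ℝ} {h : ℝ}

theorem ofReal_setAverage_cube_eq_dyadicAvg (hw : ∀ x, 0 < w x) (hloc : LocallyIntegrable w)
    (k : ℕ) (j : Fin n → ℕ) :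
    ENNReal.ofReal (⨍ y in Cube n (dyadicCorner a h k j) (dyadicSide h k), w y) =
      dyadicAvg w a h k j := by
  rw [ofReal_setAverage (hloc.integrableOn_isCompact (isCompact_cube _ _))
    (.of_forall fun y => (hw y).le), dyadicAvg, ENNReal.div_eq_inv_mul,
    volume_dyadicBox_eq_volume_cube, setLIntegral_congr (dyadicBox_ae_eq_cube k j)]

theorem ae_le_of_notMem_czSet (hw : ∀ x, 0 < w x) (hloc : LocallyIntegrable w) (hh : 0 < h)
    (t : ℝ≥0∞) :
    ∀ᵐ x, x ∈ dyadicBox a h 0 0 → x ∉ czSet w a h t → ENNReal.ofReal (w x) ≤ t := by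
  filter_upwards [IsUnifLocDoublingMeasure.ae_tendsto_average (μ := volume) hloc 1]
    with x hx hxQ hxΩ
  have hradius : Tendsto (fun k => dyadicSide h k / 2) atTop (𝓝[>] 0) := by
    refine tendsto_nhdsWithin_iff.2 ⟨?_, .of_forall fun k => half_pos (dyadicSide_pos hh k)⟩
    have := ((tendsto_pow_atTop_nhds_zero_of_lt_one (r := (2 : ℝ)⁻¹) (by norm_num)
      (by norm_num)).const_mul h).div_const 2
    simpa [dyadicSide, div_eq_mul_inv] using this
  have hmem : ∀ k, x ∈ Metric.closedBall
      (fun i => dyadicCorner a h k (dyadicIndex a h k x) i + dyadicSide h k / 2)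
      (1 * (dyadicSide h k / 2)) := fun k => by
    rw [one_mul, closedBall_eq_cube _ (dyadicSide_pos hh k).le]
    exact dyadicBox_subset_cube k _ (mem_dyadicBox_dyadicIndex hh hxQ k)
  refine le_of_tendsto' ((ENNReal.continuous_ofReal.tendsto _).comp
    (hx _ _ hradius (.of_forall hmem))) fun k => ?_
  rw [Function.comp_apply, closedBall_eq_cube _ (dyadicSide_pos hh k).le,
    ofReal_setAverage_cube_eq_dyadicAvg hw hloc]
  exact not_lt.1 fun hk => hxΩ ((mem_czSet_iff hh).2 ⟨hxQ, k, hk⟩)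

end Differentiation

section Assembly

theorem rpow_mul_one_add_le_two (n : ℕ) {C : ℝ≥0∞} (hC1 : 1 ≤ C) (hC : C ≠ ⊤) :
    ((2 : ℝ≥0∞) ^ (n + 2)) ^ ((2 : ℝ) ^ (n + 5) * C.toReal)⁻¹ * (1 + (1 - 9 * (16 * C)⁻¹)) ≤
      2 := by
  obtain ⟨K, hK0, rfl⟩ : ∃ K : ℝ, 0 ≤ K ∧ C = ENNReal.ofReal K :=
    ⟨C.toReal, ENNReal.toReal_nonneg, (ENNReal.ofReal_toReal hC).symm⟩
  have hK : 1 ≤ K := by simpa using (ENNReal.ofReal_le_ofReal_iff hK0).1 (by simpa using hC1)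
  rw [ENNReal.toReal_ofReal hK0]
  set P : ℝ := 2 ^ (n + 2)
  have hP : 1 ≤ P := one_le_pow₀ one_le_two
  have hexponent : ((2 : ℝ) ^ (n + 5) * K)⁻¹ = (8 * P * K)⁻¹ := by simp only [P]; ring
  have hbernoulli : P ^ (8 * P * K)⁻¹ ≤ 1 + (8 * K)⁻¹ :=
    calc P ^ (8 * P * K)⁻¹ = (1 + (P - 1)) ^ (8 * P * K)⁻¹ := by ring_nf
      _ ≤ 1 + (8 * P * K)⁻¹ * (P - 1) := rpow_one_add_le_one_add_mul_self (by linarith)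
          (by positivity) (inv_le_one_of_one_le₀ (by nlinarith))
      _ ≤ 1 + (8 * P * K)⁻¹ * P := by gcongr; linarith
      _ = 1 + (8 * K)⁻¹ := by field_simp
  have hθ : (1 : ℝ≥0∞) + (1 - 9 * (16 * ENNReal.ofReal K)⁻¹) =
      ENNReal.ofReal (2 - 9 * (16 * K)⁻¹) := by
    have hq : 9 * (16 * K)⁻¹ ≤ 1 := by
      rw [← div_eq_mul_inv, div_le_one (by positivity)]; linarith
    rw [show (2 : ℝ) - 9 * (16 * K)⁻¹ = 1 + (1 - 9 * (16 * K)⁻¹) by ring,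
      ENNReal.ofReal_add zero_le_one (by linarith), ENNReal.ofReal_sub _ (by positivity),
      ENNReal.ofReal_mul (by norm_num), ENNReal.ofReal_inv_of_pos (by positivity),
      ENNReal.ofReal_mul (by norm_num)]
    simp
  calc ((2 : ℝ≥0∞) ^ (n + 2)) ^ ((2 : ℝ) ^ (n + 5) * K)⁻¹ *
        (1 + (1 - 9 * (16 * ENNReal.ofReal K)⁻¹))
      ≤ ENNReal.ofReal (1 + (8 * K)⁻¹) * ENNReal.ofReal (2 - 9 * (16 * K)⁻¹) := by
        rw [hθ, hexponent, ← ENNReal.ofReal_ofNat 2, ← ENNReal.ofReal_pow zero_le_two,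
          ENNReal.ofReal_rpow_of_nonneg (by positivity) (by positivity)]
        gcongr
    _ = ENNReal.ofReal ((1 + (8 * K)⁻¹) * (2 - 9 * (16 * K)⁻¹)) :=
        (ENNReal.ofReal_mul (by positivity)).symm
    _ ≤ ENNReal.ofReal 2 := by
        refine ENNReal.ofReal_le_ofReal ?_
        field_simp
        nlinarith
    _ = 2 := ENNReal.ofReal_ofNat 2

variable {n : ℕ} {w : (Fin n → ℝ) → ℝ} {a : Fin n → ℝ} {h : ℝ}

theorem setLIntegral_rpow_le_of_A2 (hw : ∀ x, 0 < w x) (hloc : LocallyIntegrable w)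
    (hh : 0 < h) (hA2 : A2const n w ≠ ⊤) {ε : ℝ} (hε : 0 ≤ ε)
    (hεA2 : ((2 : ℝ≥0∞) ^ (n + 2)) ^ ε * (1 + (1 - 9 * (16 * A2const n w)⁻¹)) ≤ 2) :
    ∫⁻ x in dyadicBox a h 0 0, ENNReal.ofReal (w x) ^ (1 + ε) ≤
      2 * dyadicAvg w a h 0 0 ^ ε * ∫⁻ x in dyadicBox a h 0 0, ENNReal.ofReal (w x) := by
  have hoff := ae_le_of_notMem_czSet (a := a) hw hloc hh
  refine setLIntegral_rpow_le_of_levels (fun m => measurableSet_czSet _)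
    (czSet_subset_base hh _) (czSet_czLevel_succ_subset hh)
    (volume_iInter_czSet_czLevel hw hloc hh hA2) (dyadicAvg_ne_top hloc hh 0 0) (by simp) hε
    ?_ (fun m => ?_) (setLIntegral_czSet_czLevel_succ_le hw hloc hh) hεA2
  · refine (ae_restrict_iff' ((measurableSet_dyadicBox 0 0).diff (measurableSet_czSet _))).2 ?_
    filter_upwards [hoff (czLevel w a h 0)] with x hx hxS
    simpa [czLevel] using hx hxS.1 hxS.2
  · refine (ae_restrict_iff' ((measurableSet_czSet _).diff (measurableSet_czSet _))).2 ?_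
    filter_upwards [hoff (czLevel w a h (m + 1))] with x hx hxS
    exact hx (czSet_subset_base hh _ hxS.1) hxS.2

theorem setAvg_cube_eq (a : Fin n → ℝ) (h : ℝ) (f : (Fin n → ℝ) → ℝ) :
    setAvg n (Cube n a h) f =
      (volume (dyadicBox a h 0 0))⁻¹ * ∫⁻ x in dyadicBox a h 0 0, ENNReal.ofReal (f x) := by
  rw [setAvg, cube_eq_cube_dyadicCorner_zero, volume_dyadicBox_eq_volume_cube,
    setLIntegral_congr (dyadicBox_ae_eq_cube 0 0)]

end Assembly

end SharpReverseHolder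

open SharpReverseHolder in
theorem sharp_reverse_holder_A2_general (n : ℕ)
    (w : (Fin n → ℝ) → ℝ) (hw : IsA2 n w)
    (a : Fin n → ℝ) (h : ℝ) (hh : 0 < h) :
    (setAvg n (Cube n a h)
        (fun x => w x ^ (1 + ((2 : ℝ) ^ (n + 5) * (A2const n w).toReal)⁻¹)))
      ^ (1 / (1 + ((2 : ℝ) ^ (n + 5) * (A2const n w).toReal)⁻¹)) ≤
    2 * setAvg n (Cube n a h) w := by
  obtain ⟨hw0, hloc, hA2⟩ := hw
  have hA2_one : 1 ≤ A2const n w := one_le_A2const hw0 hloc.aestronglyMeasurable.aemeasurable hh a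
  set ε := ((2 : ℝ) ^ (n + 5) * (A2const n w).toReal)⁻¹
  have hε : 0 ≤ ε := by positivity
  have key := setLIntegral_rpow_le_of_A2 (a := a) hw0 hloc hh hA2.ne hε
    (rpow_mul_one_add_le_two n hA2_one hA2.ne)
  have hrpow x : ENNReal.ofReal (w x ^ (1 + ε)) = ENNReal.ofReal (w x) ^ (1 + ε) :=
    (ENNReal.ofReal_rpow_of_pos (hw0 x)).symm
  simp only [setAvg_cube_eq, hrpow]
  exact rpow_inv_mul_le_two_mul hε rfl key

/-- (Sharp reverse Hölder inequality for `A₂` weights.) If `w ∈ A₂` and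
`r_w = 1 + 1/(2^{n+5} [w]_{A₂})`, then for every cube `Q`,
`(|Q|⁻¹ ∫_Q w^{r_w})^{1/r_w} ≤ 2 |Q|⁻¹ ∫_Q w`. -/
theorem sharp_reverse_holder_A2 (n : ℕ) (hn : 1 ≤ n)
    (w : (Fin n → ℝ) → ℝ) (hw : IsA2 n w)
    (a : Fin n → ℝ) (h : ℝ) (hh : 0 < h) :
    (setAvg n (Cube n a h)
        (fun x => w x ^ (1 + ((2 : ℝ) ^ (n + 5) * (A2const n w).toReal)⁻¹)))
      ^ (1 / (1 + ((2 : ℝ) ^ (n + 5) * (A2const n w).toReal)⁻¹)) ≤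
    2 * setAvg n (Cube n a h) w :=
  sharp_reverse_holder_A2_general n w hw a h hh
end
end

section
/- Let 0 < δ < 1 and 0 < x < 1. Then ∫₀¹ (log(x/y)/(x−y)) · y^{δ−1} dy > x^{δ−1}/δ², where the integrand (which is nonnegative on (0,1)) is understood with its continuous extension y^{δ−1}/x at y = x. (This computes a lower bound for |[b,H]f(x)| with b(y) = log|y|, f(y) = y^{δ−1}·1_{(0,1)}(y), and H the Hilbert transform.) -/
/-!
For `0 < y < x` we have `x - y < x`, so `log (x / y) / (x - y) ≥ log (x / y) / x`, and the
primitive `y ^ δ * (log (x / y) + δ⁻¹) / δ` gives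
`∫₀ˣ log (x / y) y ^ (δ - 1) dy = x ^ δ / δ ^ 2`. Hence the integral over `(0, x]` alone is
at least `x ^ (δ - 1) / δ ^ 2`; the integrand is strictly positive on `(x, 1)`, which makes the
inequality strict.
-/

open MeasureTheory ENNReal

noncomputable section

open Real Set

section LogPowerIntegral

variable {δ x : ℝ}

theorem continuousOn_log_mul_rpow {r : ℝ} (hr : 0 < r) :
    ContinuousOn (fun y : ℝ => log y * y ^ r) (Ici 0) := by
  intro y hy
  rcases (mem_Ici.1 hy).eq_or_lt with rfl | hy
  · rw [← continuousWithinAt_Ioi_iff_Ici]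
    simpa [ContinuousWithinAt, zero_rpow hr.ne'] using tendsto_log_mul_rpow_nhdsGT_zero hr
  · exact ((continuousAt_log hy.ne').mul
      (continuousAt_rpow_const y r (Or.inl hy.ne'))).continuousWithinAt

theorem hasDerivAt_log_div_mul_rpow_primitive (hδ : 0 < δ) (hx : 0 < x) {y : ℝ} (hy : 0 < y) :
    HasDerivAt (fun y : ℝ => (y ^ δ * (log x + δ⁻¹) - log y * y ^ δ) / δ)
      (log (x / y) * y ^ (δ - 1)) y := by
  have hpow := hasDerivAt_rpow_const (p := δ) (Or.inl hy.ne')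
  refine (((hpow.mul_const (log x + δ⁻¹)).sub
    ((hasDerivAt_log hy.ne').mul hpow)).div_const δ).congr_deriv ?_
  rw [log_div hx.ne' hy.ne', rpow_sub_one hy.ne']
  field_simp
  ring

theorem continuousOn_log_div_mul_rpow_primitive (hδ : 0 < δ) :
    ContinuousOn (fun y : ℝ => (y ^ δ * (log x + δ⁻¹) - log y * y ^ δ) / δ) (Ici 0) :=
  (((continuous_rpow_const hδ.le).continuousOn.mul continuousOn_const).sub
    (continuousOn_log_mul_rpow hδ)).div_const δ

theorem log_div_mul_rpow_nonneg {y : ℝ} (hy : 0 < y) (hyx : y ≤ x) :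
    0 ≤ log (x / y) * y ^ (δ - 1) :=
  mul_nonneg (log_nonneg ((one_le_div hy).2 hyx)) (rpow_nonneg hy.le _)

theorem integrableOn_log_div_mul_rpow (hδ : 0 < δ) (hx : 0 < x) :
    IntegrableOn (fun y : ℝ => log (x / y) * y ^ (δ - 1)) (Ioc 0 x) :=
  intervalIntegral.integrableOn_deriv_of_nonneg
    ((continuousOn_log_div_mul_rpow_primitive hδ).mono Icc_subset_Ici_self)
    (fun _ hy => hasDerivAt_log_div_mul_rpow_primitive hδ hx hy.1)
    (fun _ hy => log_div_mul_rpow_nonneg hy.1 hy.2.le)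

theorem integral_log_div_mul_rpow (hδ : 0 < δ) (hx : 0 < x) :
    ∫ y in 0..x, log (x / y) * y ^ (δ - 1) = x ^ δ / δ ^ 2 := by
  rw [intervalIntegral.integral_eq_sub_of_hasDerivAt_of_le hx.le
    ((continuousOn_log_div_mul_rpow_primitive hδ).mono Icc_subset_Ici_self)
    (fun _ hy => hasDerivAt_log_div_mul_rpow_primitive hδ hx hy.1)
    ((intervalIntegrable_iff_integrableOn_Ioc_of_le hx.le).2
      (integrableOn_log_div_mul_rpow hδ hx))]
  simp [zero_rpow hδ.ne']
  field_simp
  ring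

end LogPowerIntegral

/-- The slope of `log` between `y` and `x`, extended continuously on the diagonal. -/
def logSlope (x y : ℝ) : ℝ := if y = x then x⁻¹ else log (x / y) / (x - y)

theorem measurable_logSlope (x : ℝ) : Measurable (logSlope x) :=
  Measurable.ite (measurableSet_singleton x) measurable_const (by fun_prop)

section LogSlope

variable {x y : ℝ}

theorem logSlope_pos (hx : 0 < x) (hy : 0 < y) : 0 < logSlope x y := by
  unfold logSlope
  split_ifs with hyx
  · positivity
  rcases lt_or_gt_of_ne hyx with hyx | hxy
  · exact div_pos (log_pos ((one_lt_div hy).2 hyx)) (sub_pos.2 hyx)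
  · exact div_pos_of_neg_of_neg (log_neg (div_pos hx hy) ((div_lt_one hy).2 hxy)) (sub_neg.2 hxy)

theorem inv_mul_log_div_le_logSlope (hy : 0 < y) (hyx : y ≤ x) :
    x⁻¹ * log (x / y) ≤ logSlope x y := by
  unfold logSlope
  split_ifs with h
  · simp [h, (hy.trans_le hyx).le]
  rw [inv_mul_eq_div]
  exact div_le_div_of_nonneg_left (log_nonneg ((one_le_div hy).2 hyx))
    (sub_pos.2 (hyx.lt_of_ne h)) (by linarith)

end LogSlope

theorem ofReal_rpow_div_sq_le_setLIntegral_logSlope {δ x : ℝ} (hδ : 0 < δ) (hx : 0 < x) :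
    ENNReal.ofReal (x ^ (δ - 1) / δ ^ 2) ≤
      ∫⁻ y in Ioc 0 x, ENNReal.ofReal (logSlope x y * y ^ (δ - 1)) :=
  calc ENNReal.ofReal (x ^ (δ - 1) / δ ^ 2)
      = ENNReal.ofReal (∫ y in Ioc 0 x, x⁻¹ * (log (x / y) * y ^ (δ - 1))) := by
        rw [integral_const_mul, ← intervalIntegral.integral_of_le hx.le,
          integral_log_div_mul_rpow hδ hx, rpow_sub_one hx.ne']
        ring_nf
    _ = ∫⁻ y in Ioc 0 x, ENNReal.ofReal (x⁻¹ * (log (x / y) * y ^ (δ - 1))) :=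
        ofReal_integral_eq_lintegral_ofReal ((integrableOn_log_div_mul_rpow hδ hx).const_mul _)
          (ae_restrict_of_forall_mem measurableSet_Ioc fun y hy =>
            mul_nonneg (inv_nonneg.2 hx.le) (log_div_mul_rpow_nonneg hy.1 hy.2))
    _ ≤ ∫⁻ y in Ioc 0 x, ENNReal.ofReal (logSlope x y * y ^ (δ - 1)) :=
        setLIntegral_mono' measurableSet_Ioc fun y hy => ENNReal.ofReal_le_ofReal <| by
          rw [← mul_assoc]
          exact mul_le_mul_of_nonneg_right (inv_mul_log_div_le_logSlope hy.1 hy.2)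
            (rpow_nonneg hy.1.le _)

theorem setLIntegral_logSlope_mul_rpow_pos {x a b : ℝ} (p : ℝ) (hx : 0 < x) (ha : 0 ≤ a)
    (hab : a < b) : 0 < ∫⁻ y in Ioo a b, ENNReal.ofReal (logSlope x y * y ^ p) := by
  have hmeas : Measurable fun y => ENNReal.ofReal (logSlope x y * y ^ p) :=
    ((measurable_logSlope x).mul (by fun_prop)).ennreal_ofReal
  rw [setLIntegral_pos_iff hmeas]
  have hsupp : Ioo a b ⊆
      Function.support (fun y => ENNReal.ofReal (logSlope x y * y ^ p)) ∩ Ioo a b :=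
    fun y hy => ⟨(ENNReal.ofReal_pos.2 (mul_pos (logSlope_pos hx (ha.trans_lt hy.1))
      (rpow_pos_of_pos (ha.trans_lt hy.1) p))).ne', hy⟩
  exact (by simpa using hab : 0 < volume (Ioo a b)).trans_le (measure_mono hsupp)

theorem commutator_hilbert_pointwise_lower_bound_general
    (δ x : ℝ) (hδ0 : 0 < δ) (hx0 : 0 < x) (hx1 : x < 1) :
    ENNReal.ofReal (x ^ (δ - 1) / δ ^ 2) <
      ∫⁻ y in Set.Ioo (0 : ℝ) 1,
        ENNReal.ofReal
          ((if y = x then x⁻¹ else Real.log (x / y) / (x - y)) * y ^ (δ - 1)) := by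
  change _ < ∫⁻ y in Ioo 0 1, ENNReal.ofReal (logSlope x y * y ^ (δ - 1))
  rw [← Ioc_union_Ioo_eq_Ioo hx0.le hx1,
    lintegral_union measurableSet_Ioo (Ioc_disjoint_Ioi_same.mono_right Ioo_subset_Ioi_self)]
  calc ENNReal.ofReal (x ^ (δ - 1) / δ ^ 2)
      < ENNReal.ofReal (x ^ (δ - 1) / δ ^ 2) +
          ∫⁻ y in Ioo x 1, ENNReal.ofReal (logSlope x y * y ^ (δ - 1)) :=
        ENNReal.lt_add_right ofReal_ne_top
          (setLIntegral_logSlope_mul_rpow_pos _ hx0 hx0.le hx1).ne'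
    _ ≤ _ := by gcongr; exact ofReal_rpow_div_sq_le_setLIntegral_logSlope hδ0 hx0

/-- For `0 < δ < 1` and `0 < x < 1`,
`∫₀¹ (log(x/y)/(x-y)) y^{δ-1} dy > x^{δ-1}/δ²`, where the (nonnegative) integrand is understood
with its continuous extension `y^{δ-1}/x` at `y = x`. This computes a lower bound for
`|[b,H]f(x)|` with `b(y) = log|y|`, `f(y) = y^{δ-1} 1_{(0,1)}(y)` and `H` the Hilbert
transform. -/
theorem commutator_hilbert_pointwise_lower_bound
    (δ x : ℝ) (hδ0 : 0 < δ) (hδ1 : δ < 1) (hx0 : 0 < x) (hx1 : x < 1) :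
    ENNReal.ofReal (x ^ (δ - 1) / δ ^ 2) <
      ∫⁻ y in Set.Ioo (0 : ℝ) 1,
        ENNReal.ofReal
          ((if y = x then x⁻¹ else Real.log (x / y) / (x - y)) * y ^ (δ - 1)) :=
  commutator_hilbert_pointwise_lower_bound_general δ x hδ0 hx0 hx1
end
end

section
/- Let b(x) = log|x| on ℝ and let H be the Hilbert transform. For every increasing function φ : [1,∞) → [0,∞) with lim_{t→∞} t²/φ(t) = ∞ and every constant C > 0, there exist a weight w ∈ A₂ on ℝ and a function f with 0 < ‖f‖_{L²(w)} < ∞ such that ‖[b,H]f‖_{L²(w)} > C φ([w]_{A₂}) ‖f‖_{L²(w)}. Consequently sup_{w ∈ A₂} ‖[b,H]‖_{L²(w)→L²(w)} / φ([w]_{A₂}) = ∞. -/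
open MeasureTheory ENNReal

noncomputable section

/-- `|Q|⁻¹ ∫_Q f` over a set of reals, as an extended nonnegative real. -/
def setAvgR (Q : Set ℝ) (f : ℝ → ℝ) : ℝ≥0∞ :=
  (volume Q)⁻¹ * ∫⁻ x in Q, ENNReal.ofReal (f x)

/-- The `A₂` constant of a weight on `ℝ`, the supremum being over all bounded intervals. -/
def A2constR (w : ℝ → ℝ) : ℝ≥0∞ :=
  ⨆ (a : ℝ) (h : ℝ) (_ : 0 < h),
    setAvgR (Set.Ioo a (a + h)) w * setAvgR (Set.Ioo a (a + h)) (fun x => (w x)⁻¹)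

/-- The weighted norm `‖f‖_{L^p(w)} = (∫ |f|^p w)^{1/p}` on `ℝ`. -/
def wNormR (p : ℝ) (w f : ℝ → ℝ) : ℝ≥0∞ :=
  (∫⁻ x, (ENNReal.ofReal |f x|) ^ p * ENNReal.ofReal (w x)) ^ (1 / p)

/-- The commutator of the Hilbert transform with `b`:
`[b,H]f(x) = p.v. ∫ (b(x)-b(y)) f(y)/(x-y) dy`, the principal value being the limit of the
truncated integrals as the truncation parameter `ε` tends to `0⁺`. -/
def pvCommH (b f : ℝ → ℝ) (x : ℝ) : ℝ :=
  Filter.limUnder (nhdsWithin 0 (Set.Ioi (0 : ℝ))) fun ε : ℝ =>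
    ∫ y in {y : ℝ | ε < |x - y|}, (b x - b y) * f y / (x - y)

/-!
Take the power weight `w_δ(x) = |x|^(δ-1)` with `0 < δ ≤ 1` and `f = 1_(0,1)`. On an interval far
from the origin `w_δ` is comparable to a constant, and near the origin its integral is explicit, so
`1 ≤ [w_δ]_{A₂} ≤ 4/δ`, while `‖f‖²_{L²(w_δ)} = 1/δ`. For `0 < s < 1` the principal value at `-s`
is an ordinary integral, `[b,H]f(-s) = ∫₀¹ (log y - log s)/(s + y) dy`; its part over `(0,s)` is at
least `-1` and its part over `(s,1)` at least `(log s)²/4`. Hence `[b,H]f ≥ 1/(2δ²)` on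
`(-e^(-2/δ), 0)`, a set of `w_δ`-measure `e⁻²/δ`, and `‖[b,H]f‖ ≥ e⁻¹/(2δ²) ‖f‖`, which is of
order `[w_δ]²_{A₂} ‖f‖`. Since `t²/φ(t) → ∞`, this exceeds `C φ([w_δ]_{A₂}) ‖f‖ ≤ C φ(4/δ) ‖f‖`
for small `δ`.
-/

open Set Real

namespace CommutatorSharpness

open Filter

variable {δ x s : ℝ}

-- `Real.rpow` has `0 ^ (δ - 1) = 0` for `δ ≠ 1`, so the origin gets the value `1` to keep the
-- weight positive everywhere.
def powWeight (δ x : ℝ) : ℝ := if x = 0 then 1 else |x| ^ (δ - 1)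

lemma powWeight_of_ne (hx : x ≠ 0) : powWeight δ x = |x| ^ (δ - 1) := if_neg hx

lemma powWeight_of_pos (hx : 0 < x) : powWeight δ x = x ^ (δ - 1) := by
  rw [powWeight_of_ne hx.ne', abs_of_pos hx]

lemma powWeight_pos (δ x : ℝ) : 0 < powWeight δ x := by
  unfold powWeight
  split_ifs with hx
  · exact one_pos
  · exact rpow_pos_of_pos (abs_pos.mpr hx) _

lemma powWeight_neg (δ x : ℝ) : powWeight δ (-x) = powWeight δ x := by
  simp only [powWeight, neg_eq_zero, abs_neg]

lemma inv_powWeight (δ x : ℝ) : (powWeight δ x)⁻¹ = powWeight (2 - δ) x := by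
  unfold powWeight
  split_ifs with hx
  · exact inv_one
  · rw [← rpow_neg (abs_nonneg x)]
    ring_nf

lemma measurable_powWeight (δ : ℝ) : Measurable (powWeight δ) :=
  Measurable.ite (measurableSet_singleton 0) measurable_const (by fun_prop)

lemma setLIntegral_Ioo_neg_of_even {g : ℝ → ℝ≥0∞} (hg : ∀ x, g (-x) = g x) (b : ℝ) :
    ∫⁻ x in Ioo (-b) 0, g x = ∫⁻ x in Ioo 0 b, g x := by
  rw [← lintegral_indicator measurableSet_Ioo, ← lintegral_indicator measurableSet_Ioo,
    ← lintegral_neg_eq_self]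
  congr 1 with x
  simp only [indicator, mem_Ioo, neg_lt_neg_iff, neg_lt_zero, hg, and_comm]

lemma lintegral_powWeight_Ioo (hδ : 0 < δ) {a b : ℝ} (ha : 0 ≤ a) (hab : a ≤ b) :
    ∫⁻ x in Ioo a b, ENNReal.ofReal (powWeight δ x) = ENNReal.ofReal ((b ^ δ - a ^ δ) / δ) := by
  have hrpow : IntervalIntegrable (fun x : ℝ => x ^ (δ - 1)) volume a b :=
    intervalIntegral.intervalIntegrable_rpow' (by linarith)
  rw [setLIntegral_congr_fun measurableSet_Ioo fun x hx => by
      rw [powWeight_of_pos (ha.trans_lt hx.1)],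
    ← ofReal_integral_eq_lintegral_ofReal
      ((hrpow.1).mono_set Ioo_subset_Ioc_self)
      ((ae_restrict_mem measurableSet_Ioo).mono fun x hx => rpow_nonneg (ha.trans hx.1.le) _),
    ← integral_Ioc_eq_integral_Ioo, ← intervalIntegral.integral_of_le hab,
    integral_rpow (Or.inl (by linarith))]
  ring_nf

lemma lintegral_powWeight_Icc_le (hδ : 0 < δ) {r : ℝ} (hr : 0 < r) :
    ∫⁻ x in Icc (-r) r, ENNReal.ofReal (powWeight δ x) ≤ ENNReal.ofReal (2 * (r ^ δ / δ)) := by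
  have hright : ∫⁻ x in Ioo 0 r, ENNReal.ofReal (powWeight δ x) = ENNReal.ofReal (r ^ δ / δ) := by
    rw [lintegral_powWeight_Ioo hδ le_rfl hr.le, zero_rpow hδ.ne', sub_zero]
  have hleft : ∫⁻ x in Ioo (-r) 0, ENNReal.ofReal (powWeight δ x) = ENNReal.ofReal (r ^ δ / δ) :=
    (setLIntegral_Ioo_neg_of_even (fun x => by rw [powWeight_neg]) r).trans hright
  calc ∫⁻ x in Icc (-r) r, ENNReal.ofReal (powWeight δ x)
      = ∫⁻ x in Ioo (-r) 0 ∪ Ico 0 r, ENNReal.ofReal (powWeight δ x) := by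
        rw [Ioo_union_Ico_eq_Ioo (neg_neg_of_pos hr) hr.le]
        exact setLIntegral_congr Ioo_ae_eq_Icc.symm
    _ ≤ (∫⁻ x in Ioo (-r) 0, ENNReal.ofReal (powWeight δ x))
          + ∫⁻ x in Ico 0 r, ENNReal.ofReal (powWeight δ x) := lintegral_union_le _ _ _
    _ = ENNReal.ofReal (2 * (r ^ δ / δ)) := by
        rw [hleft, (setLIntegral_congr Ioo_ae_eq_Ico.symm).trans hright,
          ← ENNReal.ofReal_add (by positivity) (by positivity), two_mul]

lemma locallyIntegrable_powWeight (hδ : 0 < δ) : LocallyIntegrable (powWeight δ) := by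
  refine locallyIntegrable_iff.2 fun K hK => ?_
  obtain ⟨r, hr, hKr⟩ := hK.isBounded.subset_closedBall_lt 0 0
  rw [Real.closedBall_zero_eq_Icc] at hKr
  refine IntegrableOn.mono_set ⟨(measurable_powWeight δ).aestronglyMeasurable, ?_⟩ hKr
  rw [hasFiniteIntegral_iff_ofReal (ae_of_all _ fun x => (powWeight_pos δ x).le)]
  exact (lintegral_powWeight_Icc_le hδ hr).trans_lt ENNReal.ofReal_lt_top

lemma setAvgR_le_ofReal {Q : Set ℝ} {g : ℝ → ℝ} {M : ℝ} (hQ0 : volume Q ≠ 0)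
    (hQ : volume Q ≠ ∞) (hg : ∀ᵐ x ∂volume.restrict Q, g x ≤ M) :
    setAvgR Q g ≤ ENNReal.ofReal M := by
  unfold setAvgR
  calc (volume Q)⁻¹ * ∫⁻ x in Q, ENNReal.ofReal (g x)
      ≤ (volume Q)⁻¹ * ∫⁻ _ in Q, ENNReal.ofReal M := by
        gcongr 1
        exact lintegral_mono_ae (hg.mono fun x hx => ENNReal.ofReal_le_ofReal hx)
    _ = ENNReal.ofReal M := by
        rw [setLIntegral_const, mul_comm, mul_assoc, ENNReal.mul_inv_cancel hQ0 hQ, mul_one]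

lemma powWeight_le_of_le_abs (hδ1 : δ ≤ 1) {ρ : ℝ} (hρ : 0 < ρ) (hx : ρ ≤ |x|) :
    powWeight δ x ≤ ρ ^ (δ - 1) := by
  rw [powWeight_of_ne (abs_pos.1 (hρ.trans_le hx))]
  exact rpow_le_rpow_of_nonpos hρ hx (by linarith)

lemma inv_powWeight_le_of_abs_le (hδ1 : δ ≤ 1) {R : ℝ} (hx0 : x ≠ 0) (hx : |x| ≤ R) :
    (powWeight δ x)⁻¹ ≤ R ^ (1 - δ) := by
  rw [inv_powWeight, powWeight_of_ne hx0, show 2 - δ - 1 = 1 - δ by ring]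
  exact rpow_le_rpow (abs_nonneg x) hx (by linarith)

lemma setAvgR_powWeight_le_of_subset_Icc (hδ : 0 < δ) {a h R : ℝ} (hh : 0 < h) (hR : 0 < R)
    (hQ : Ioo a (a + h) ⊆ Icc (-R) R) :
    setAvgR (Ioo a (a + h)) (powWeight δ) ≤ ENNReal.ofReal (2 * (R ^ δ / δ) / h) := by
  rw [setAvgR, Real.volume_Ioo, add_sub_cancel_left, ← ENNReal.ofReal_inv_of_pos hh,
    div_eq_mul_inv _ h, mul_comm _ h⁻¹, ENNReal.ofReal_mul (inv_nonneg.2 hh.le)]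
  gcongr 1
  exact (lintegral_mono_set hQ).trans (lintegral_powWeight_Icc_le hδ hR)

lemma abs_mem_Icc_of_mem_Ioo {a h : ℝ} (hx : x ∈ Ioo a (a + h)) :
    |x| ∈ Icc (max |a| |a + h| - h) (max |a| |a + h|) := by
  refine ⟨sub_le_iff_le_add.2 (max_le ?_ ?_), abs_le_max_abs_abs hx.1.le hx.2.le⟩
  · linarith [abs_sub_abs_le_abs_sub a x, abs_of_neg (sub_neg.2 hx.1), hx.2]
  · linarith [abs_sub_abs_le_abs_sub (a + h) x, abs_of_pos (sub_pos.2 hx.2), hx.1]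

lemma setAvgR_mul_setAvgR_powWeight_le (hδ : 0 < δ) (hδ1 : δ ≤ 1) {a h : ℝ} (hh : 0 < h) :
    setAvgR (Ioo a (a + h)) (powWeight δ) * setAvgR (Ioo a (a + h)) (fun x => (powWeight δ x)⁻¹)
      ≤ ENNReal.ofReal (4 / δ) := by
  set R := max |a| |a + h|
  have hxR : ∀ x ∈ Ioo a (a + h), |x| ∈ Icc (R - h) R := fun x hx => abs_mem_Icc_of_mem_Ioo hx
  have hR : h / 2 ≤ R := by
    linarith [le_abs_self (a + h), neg_abs_le a, le_max_left |a| |a + h|,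
      le_max_right |a| |a + h|]
  have hvol : volume (Ioo a (a + h)) = ENNReal.ofReal h := by
    rw [Real.volume_Ioo, add_sub_cancel_left]
  have hvol0 : volume (Ioo a (a + h)) ≠ 0 := by simpa [hvol] using hh
  have hvolTop : volume (Ioo a (a + h)) ≠ ∞ := by simp [hvol]
  have hinv : setAvgR (Ioo a (a + h)) (fun x => (powWeight δ x)⁻¹) ≤ ENNReal.ofReal (R ^ (1 - δ)) :=
    setAvgR_le_ofReal hvol0 hvolTop <| by
      filter_upwards [ae_restrict_mem measurableSet_Ioo, ae_restrict_of_ae (volume.ae_ne 0)]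
        with x hxQ hx0 using inv_powWeight_le_of_abs_le hδ1 hx0 (hxR x hxQ).2
  -- Either the interval is long compared to its distance from the origin, or `w` is within a
  -- factor `2 ^ (1 - δ)` of a constant on it.
  rcases le_or_gt R (2 * h) with hnear | hfar
  · have hw := setAvgR_powWeight_le_of_subset_Icc hδ hh (by linarith)
      fun x hx => abs_le.1 (hxR x hx).2
    calc _ ≤ ENNReal.ofReal (2 * (R ^ δ / δ) / h) * ENNReal.ofReal (R ^ (1 - δ)) :=
          mul_le_mul' hw hinv
      _ = ENNReal.ofReal (2 * (R ^ δ * R ^ (1 - δ)) / (δ * h)) := by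
          rw [← ENNReal.ofReal_mul (by positivity)]
          congr 1
          field_simp
      _ = ENNReal.ofReal (2 * R / (δ * h)) := by
          rw [← rpow_add (by linarith), add_sub_cancel, Real.rpow_one]
      _ ≤ ENNReal.ofReal (4 / δ) := by
          gcongr 1
          rw [div_le_div_iff₀ (by positivity) hδ]
          nlinarith
  · have hw : setAvgR (Ioo a (a + h)) (powWeight δ) ≤ ENNReal.ofReal ((R / 2) ^ (δ - 1)) :=
      setAvgR_le_ofReal hvol0 hvolTop <| (ae_restrict_mem measurableSet_Ioo).mono fun x hx =>
        powWeight_le_of_le_abs hδ1 (by linarith) (by linarith [(hxR x hx).1])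
    calc _ ≤ ENNReal.ofReal ((R / 2) ^ (δ - 1)) * ENNReal.ofReal (R ^ (1 - δ)) :=
          mul_le_mul' hw hinv
      _ = ENNReal.ofReal (2 ^ (1 - δ)) := by
          rw [← ENNReal.ofReal_mul (by positivity), div_rpow (by linarith) zero_le_two,
            div_mul_eq_mul_div, ← rpow_add (by linarith), show δ - 1 + (1 - δ) = 0 by ring,
            Real.rpow_zero, one_div, ← rpow_neg zero_le_two, neg_sub]
      _ ≤ ENNReal.ofReal (4 / δ) := by
          gcongr 1
          calc (2 : ℝ) ^ (1 - δ) ≤ 2 ^ (1 : ℝ) :=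
                rpow_le_rpow_of_exponent_le one_le_two (by linarith)
            _ ≤ 4 / δ := by rw [Real.rpow_one, le_div_iff₀ hδ]; linarith

lemma A2constR_powWeight_le (hδ : 0 < δ) (hδ1 : δ ≤ 1) :
    A2constR (powWeight δ) ≤ ENNReal.ofReal (4 / δ) :=
  iSup₂_le fun _ _ => iSup_le fun hh => setAvgR_mul_setAvgR_powWeight_le hδ hδ1 hh

lemma setAvgR_Ioo_zero_one_powWeight (hδ : 0 < δ) :
    setAvgR (Ioo 0 (0 + 1)) (powWeight δ) = ENNReal.ofReal (1 / δ) := by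
  rw [setAvgR, zero_add, Real.volume_Ioo, sub_zero, ENNReal.ofReal_one, inv_one, one_mul,
    lintegral_powWeight_Ioo hδ le_rfl zero_le_one, Real.one_rpow, zero_rpow hδ.ne', sub_zero]

lemma one_le_A2constR_powWeight (hδ : 0 < δ) (hδ2 : δ < 2) : 1 ≤ A2constR (powWeight δ) := by
  refine le_iSup_of_le 0 (le_iSup_of_le 1 (le_iSup_of_le one_pos ?_))
  simp_rw [inv_powWeight]
  rw [setAvgR_Ioo_zero_one_powWeight hδ, setAvgR_Ioo_zero_one_powWeight (by linarith),
    ← ENNReal.ofReal_mul (by positivity), ← ENNReal.ofReal_one]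
  refine ENNReal.ofReal_le_ofReal ?_
  rw [div_mul_div_comm, one_mul, le_div_iff₀ (by nlinarith)]
  nlinarith [sq_nonneg (1 - δ)]

lemma toReal_A2constR_powWeight_mem_Icc (hδ : 0 < δ) (hδ1 : δ ≤ 1) :
    (A2constR (powWeight δ)).toReal ∈ Icc 1 (4 / δ) := by
  have hA2 := A2constR_powWeight_le hδ hδ1
  refine ⟨?_, ?_⟩
  · simpa using ENNReal.toReal_mono (hA2.trans_lt ENNReal.ofReal_lt_top).ne
      (one_le_A2constR_powWeight hδ (by linarith))
  · rw [← ENNReal.toReal_ofReal (by positivity : (0 : ℝ) ≤ 4 / δ)]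
    exact ENNReal.toReal_mono ENNReal.ofReal_ne_top hA2

lemma wNormR_mono {p : ℝ} (hp : 0 ≤ p) {w f g : ℝ → ℝ} (hfg : ∀ x, |f x| ≤ |g x|) :
    wNormR p w f ≤ wNormR p w g := by
  unfold wNormR
  gcongr ?_ ^ _
  refine lintegral_mono fun x => ?_
  gcongr ?_ * _
  exact ENNReal.rpow_le_rpow (ENNReal.ofReal_le_ofReal (hfg x)) hp

lemma wNormR_indicator_const {p : ℝ} (hp : 0 < p) {S : Set ℝ} (hS : MeasurableSet S)
    (w : ℝ → ℝ) (c : ℝ) :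
    wNormR p w (S.indicator fun _ => c)
      = ENNReal.ofReal |c| * (∫⁻ x in S, ENNReal.ofReal (w x)) ^ (1 / p) := by
  have hintegrand :
      (fun x => ENNReal.ofReal |S.indicator (fun _ => c) x| ^ p * ENNReal.ofReal (w x))
        = S.indicator fun x => ENNReal.ofReal |c| ^ p * ENNReal.ofReal (w x) := by
    funext x
    by_cases hx : x ∈ S <;> simp [hx, hp]
  rw [wNormR, hintegrand, lintegral_indicator hS,
    lintegral_const_mul' _ _ (ENNReal.rpow_ne_top_of_nonneg hp.le ENNReal.ofReal_ne_top),
    ENNReal.mul_rpow_of_nonneg _ _ (by positivity), ← ENNReal.rpow_mul, mul_one_div_cancel hp.ne',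
    ENNReal.rpow_one]

lemma pvCommH_eq_integral_of_forall_abs_sub_lt {b f : ℝ → ℝ} {x r : ℝ} (hr : 0 < r)
    (hf : ∀ y, |x - y| < r → f y = 0) :
    pvCommH b f x = ∫ y, (b x - b y) * f y / (x - y) := by
  refine Tendsto.limUnder_eq (tendsto_const_nhds.congr' ?_)
  filter_upwards [Ioo_mem_nhdsGT hr] with ε hε
  refine (setIntegral_eq_integral_of_forall_compl_eq_zero fun y hy => ?_).symm
  rw [hf y ((not_lt.1 hy).trans_lt hε.2), mul_zero, zero_div]

lemma pvCommH_log_indicator_eq (hs : 0 < s) :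
    pvCommH (fun t => Real.log |t|) ((Ioo 0 1).indicator fun _ => 1) (-s)
      = ∫ y in (0)..1, (Real.log y - Real.log s) / (s + y) := by
  rw [pvCommH_eq_integral_of_forall_abs_sub_lt hs fun y hy => indicator_of_notMem (fun hy' => by
      rw [abs_of_neg (by linarith [hy'.1])] at hy; linarith [hy'.1]) _,
    intervalIntegral.integral_of_le zero_le_one, integral_Ioc_eq_integral_Ioo,
    ← integral_indicator measurableSet_Ioo]
  congr 1 with y
  by_cases hy : y ∈ Ioo (0 : ℝ) 1
  · rw [indicator_of_mem hy, indicator_of_mem hy, abs_of_pos hy.1, abs_neg, abs_of_pos hs,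
      mul_one, show -s - y = -(s + y) by ring, div_neg, ← neg_div, neg_sub]
  · simp [hy]

lemma intervalIntegrable_log_sub_div (hs : 0 < s) {a b : ℝ} (ha : 0 ≤ a) (hb : 0 ≤ b) :
    IntervalIntegrable (fun y => (Real.log y - Real.log s) / (s + y)) volume a b := by
  refine IntervalIntegrable.mono_fun'
    ((intervalIntegral.intervalIntegrable_log'.abs.add
      (intervalIntegrable_const (c := |Real.log s|))).div_const s)
    (by fun_prop : Measurable fun y => (Real.log y - Real.log s) / (s + y)).aestronglyMeasurable ?_
  filter_upwards [ae_restrict_mem measurableSet_uIoc] with y hy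
  have hy0 : 0 < y := (le_min ha hb).trans_lt hy.1
  simp only [norm_div, Real.norm_eq_abs]
  rw [abs_of_pos (a := s + y) (by linarith)]
  calc |Real.log y - Real.log s| / (s + y) ≤ |Real.log y - Real.log s| / s :=
        div_le_div_of_nonneg_left (abs_nonneg _) hs (by linarith)
    _ ≤ (|Real.log y| + |Real.log s|) / s := by gcongr; exact abs_sub _ _

lemma neg_one_le_integral_log_sub_div (hs : 0 < s) :
    -1 ≤ ∫ y in (0)..s, (Real.log y - Real.log s) / (s + y) := by
  have hlower : ∫ y in (0)..s, (Real.log y - Real.log s) / s = -1 := by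
    rw [intervalIntegral.integral_div, intervalIntegral.integral_sub
      intervalIntegral.intervalIntegrable_log' intervalIntegrable_const, integral_log,
      intervalIntegral.integral_const]
    field_simp
    simp
  rw [← hlower]
  refine intervalIntegral.integral_mono_on hs.le
    ((intervalIntegral.intervalIntegrable_log'.sub intervalIntegrable_const).div_const s)
    (intervalIntegrable_log_sub_div hs le_rfl hs.le) fun y hy => ?_
  rcases hy.1.eq_or_lt with rfl | hy0
  · rw [add_zero]
  · rw [div_le_div_iff₀ hs (by linarith)]
    nlinarith [Real.log_le_log hy0 hy.2]

lemma sq_log_div_four_le_integral_log_sub_div (hs : 0 < s) (hs1 : s ≤ 1) :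
    Real.log s ^ 2 / 4 ≤ ∫ y in s..1, (Real.log y - Real.log s) / (s + y) := by
  have hprim : ∀ y ∈ uIcc s 1, HasDerivAt (fun t => (Real.log t - Real.log s) ^ 2 / 4)
      ((Real.log y - Real.log s) / (2 * y)) y := by
    intro y hy
    rw [uIcc_of_le hs1] at hy
    have hy0 : y ≠ 0 := (hs.trans_le hy.1).ne'
    refine ((((Real.hasDerivAt_log hy0).sub_const (Real.log s)).pow 2).div_const 4).congr_deriv ?_
    field_simp
    ring
  have hcont : ContinuousOn (fun y => (Real.log y - Real.log s) / (2 * y)) (uIcc s 1) := by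
    intro y hy
    rw [uIcc_of_le hs1] at hy
    have hy0 : y ≠ 0 := (hs.trans_le hy.1).ne'
    exact (((Real.continuousAt_log hy0).sub continuousAt_const).div
      (continuousAt_const.mul continuousAt_id) (mul_ne_zero two_ne_zero hy0)).continuousWithinAt
  have hexact := intervalIntegral.integral_eq_sub_of_hasDerivAt hprim hcont.intervalIntegrable
  rw [Real.log_one, sub_self] at hexact
  calc Real.log s ^ 2 / 4 = ∫ y in s..1, (Real.log y - Real.log s) / (2 * y) := by
        rw [hexact]; ring
    _ ≤ ∫ y in s..1, (Real.log y - Real.log s) / (s + y) := by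
        refine intervalIntegral.integral_mono_on hs1 hcont.intervalIntegrable
          (intervalIntegrable_log_sub_div hs hs.le zero_le_one) fun y hy =>
          div_le_div_of_nonneg_left (sub_nonneg.2 (Real.log_le_log hs hy.1)) (by linarith [hy.1])
            (by linarith [hy.1])

lemma sq_log_div_eight_le_pvCommH (hs : 0 < s) (hs3 : Real.log s ≤ -3) :
    Real.log s ^ 2 / 8 ≤ pvCommH (fun t => Real.log |t|) ((Ioo 0 1).indicator fun _ => 1) (-s) := by
  have hs1 : s ≤ 1 := ((Real.log_neg_iff hs).1 (by linarith)).le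
  rw [pvCommH_log_indicator_eq hs, ← intervalIntegral.integral_add_adjacent_intervals
    (intervalIntegrable_log_sub_div hs le_rfl hs.le)
    (intervalIntegrable_log_sub_div hs hs.le zero_le_one)]
  nlinarith [neg_one_le_integral_log_sub_div hs, sq_log_div_four_le_integral_log_sub_div hs hs1]

lemma one_div_two_mul_sq_le_pvCommH (hδ : 0 < δ) (hδ23 : δ ≤ 2 / 3)
    (hx : x ∈ Ioo (-Real.exp (-(2 / δ))) 0) :
    1 / (2 * δ ^ 2) ≤ pvCommH (fun t => Real.log |t|) ((Ioo 0 1).indicator fun _ => 1) x := by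
  have hs : 0 < -x := neg_pos.2 hx.2
  have hlog : Real.log (-x) < -(2 / δ) := by
    rw [← Real.log_exp (-(2 / δ))]
    exact Real.log_lt_log hs (by linarith [hx.1])
  have hδ3 : 3 ≤ 2 / δ := by
    rw [le_div_iff₀ hδ]
    linarith
  have hsq : (2 / δ) ^ 2 ≤ Real.log (-x) ^ 2 := by
    simpa only [neg_sq] using
      sq_le_sq' (a := 2 / δ) (b := -Real.log (-x)) (by linarith) (by linarith)
  calc 1 / (2 * δ ^ 2) = (2 / δ) ^ 2 / 8 := by field_simp; norm_num
    _ ≤ Real.log (-x) ^ 2 / 8 := by gcongr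
    _ ≤ _ := by simpa only [neg_neg] using sq_log_div_eight_le_pvCommH hs (by linarith)

lemma wNormR_powWeight_indicator_Ioo_zero_one (hδ : 0 < δ) :
    wNormR 2 (powWeight δ) ((Ioo 0 1).indicator fun _ => 1)
      = ENNReal.ofReal (1 / δ) ^ (1 / 2 : ℝ) := by
  rw [wNormR_indicator_const two_pos measurableSet_Ioo,
    lintegral_powWeight_Ioo hδ le_rfl zero_le_one,
    Real.one_rpow, zero_rpow hδ.ne', sub_zero, abs_one, ENNReal.ofReal_one, one_mul]

lemma wNormR_pvCommH_log_indicator_ge (hδ : 0 < δ) (hδ23 : δ ≤ 2 / 3) :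
    ENNReal.ofReal (Real.exp (-1) / (2 * δ ^ 2))
        * wNormR 2 (powWeight δ) ((Ioo 0 1).indicator fun _ => 1)
      ≤ wNormR 2 (powWeight δ)
          (pvCommH (fun t => Real.log |t|) ((Ioo 0 1).indicator fun _ => 1)) := by
  set b := Real.exp (-(2 / δ))
  have hdominate : ∀ x, |(Ioo (-b) 0).indicator (fun _ => 1 / (2 * δ ^ 2)) x|
      ≤ |pvCommH (fun t => Real.log |t|) ((Ioo 0 1).indicator fun _ => 1) x| := by
    intro x
    by_cases hx : x ∈ Ioo (-b) 0
    · rw [indicator_of_mem hx, abs_of_pos (by positivity)]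
      exact (one_div_two_mul_sq_le_pvCommH hδ hδ23 hx).trans (le_abs_self _)
    · rw [indicator_of_notMem hx, abs_zero]
      exact abs_nonneg _
  have hmass : ∫⁻ x in Ioo (-b) 0, ENNReal.ofReal (powWeight δ x)
      = ENNReal.ofReal (Real.exp (-2) * (1 / δ)) := by
    rw [setLIntegral_Ioo_neg_of_even (fun x => by rw [powWeight_neg]),
      lintegral_powWeight_Ioo hδ le_rfl (Real.exp_pos _).le, zero_rpow hδ.ne', sub_zero,
      ← Real.exp_mul, neg_mul, div_mul_cancel₀ _ hδ.ne', mul_one_div]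
  calc _ = ENNReal.ofReal |1 / (2 * δ ^ 2)| * (∫⁻ x in Ioo (-b) 0, ENNReal.ofReal (powWeight δ x))
        ^ (1 / 2 : ℝ) := by
        rw [wNormR_powWeight_indicator_Ioo_zero_one hδ, hmass,
          ENNReal.ofReal_mul (Real.exp_pos _).le, ENNReal.mul_rpow_of_nonneg _ _ (by norm_num),
          ENNReal.ofReal_rpow_of_nonneg (Real.exp_pos _).le (by norm_num), ← Real.exp_mul,
          ← mul_assoc, ← ENNReal.ofReal_mul (by positivity), abs_of_pos (by positivity)]
        congr 2
        rw [show (-2 : ℝ) * (1 / 2) = -1 by norm_num]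
        ring
    _ = wNormR 2 (powWeight δ) ((Ioo (-b) 0).indicator fun _ => 1 / (2 * δ ^ 2)) :=
        (wNormR_indicator_const two_pos measurableSet_Ioo _ _).symm
    _ ≤ _ := wNormR_mono zero_le_two hdominate

lemma exists_ge_mul_lt_mul_sq {φ : ℝ → ℝ} (hφ : Tendsto (fun t => t ^ 2 / φ t) atTop atTop)
    {C κ : ℝ} (hC : 0 ≤ C) (hκ : 0 < κ) (t₀ : ℝ) : ∃ T ≥ t₀, C * φ T < κ * T ^ 2 := by
  obtain ⟨T, hT, hTt₀⟩ := ((hφ.eventually_gt_atTop (C / κ)).and (eventually_ge_atTop t₀)).exists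
  have hφT : 0 < φ T := by
    by_contra! hφT
    linarith [div_nonpos_of_nonneg_of_nonpos (sq_nonneg T) hφT, div_nonneg hC hκ.le]
  rw [div_lt_div_iff₀ hκ hφT] at hT
  exact ⟨T, hTt₀, by linarith⟩

end CommutatorSharpness

open CommutatorSharpness

theorem commutator_hilbert_sharpness_general
    (φ : ℝ → ℝ) (hφmono : MonotoneOn φ (Set.Ici 1))
    (hφlim : Filter.Tendsto (fun t : ℝ => t ^ 2 / φ t) Filter.atTop Filter.atTop)
    (C : ℝ) (hC : 0 < C) :
    ∃ w : ℝ → ℝ, (∀ x, 0 < w x) ∧ LocallyIntegrable w ∧ A2constR w < ⊤ ∧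
      ∃ f : ℝ → ℝ, 0 < wNormR 2 w f ∧ wNormR 2 w f < ⊤ ∧
        ENNReal.ofReal (C * φ ((A2constR w).toReal)) * wNormR 2 w f <
          wNormR 2 w (pvCommH (fun x => Real.log |x|) f) := by
  obtain ⟨T, hT6, hCφT⟩ :=
    exists_ge_mul_lt_mul_sq hφlim hC.le (κ := Real.exp (-1) / 32) (by positivity) 6
  set δ := 4 / T with hδ_def
  have hδ : 0 < δ := by positivity
  have hδ23 : δ ≤ 2 / 3 := by rw [hδ_def, div_le_iff₀ (by positivity)]; linarith
  have hT : T = 4 / δ := by rw [hδ_def, div_div_cancel₀ (by positivity)]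
  obtain ⟨hA1, hAT⟩ := toReal_A2constR_powWeight_mem_Icc hδ (by linarith)
  rw [← hT] at hAT
  have hCφA : C * φ (A2constR (powWeight δ)).toReal < Real.exp (-1) / (2 * δ ^ 2) :=
    calc _ ≤ C * φ T := by gcongr; exact hφmono hA1 (hA1.trans hAT) hAT
      _ < Real.exp (-1) / 32 * T ^ 2 := hCφT
      _ = Real.exp (-1) / (2 * δ ^ 2) := by rw [hT]; field_simp; norm_num
  have hF0 : wNormR 2 (powWeight δ) ((Ioo 0 1).indicator fun _ => 1) ≠ 0 := by
    simp [wNormR_powWeight_indicator_Ioo_zero_one hδ, hδ]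
  have hFtop : wNormR 2 (powWeight δ) ((Ioo 0 1).indicator fun _ => 1) ≠ ⊤ := by
    simp [wNormR_powWeight_indicator_Ioo_zero_one hδ]
  refine ⟨powWeight δ, powWeight_pos δ, locallyIntegrable_powWeight hδ,
    (A2constR_powWeight_le hδ (by linarith)).trans_lt ENNReal.ofReal_lt_top,
    (Ioo 0 1).indicator fun _ => 1, pos_iff_ne_zero.2 hF0, lt_top_iff_ne_top.2 hFtop, ?_⟩
  calc _ < ENNReal.ofReal (Real.exp (-1) / (2 * δ ^ 2))
          * wNormR 2 (powWeight δ) ((Ioo 0 1).indicator fun _ => 1) :=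
        (ENNReal.mul_lt_mul_iff_left hF0 hFtop).2
          ((ENNReal.ofReal_lt_ofReal_iff (by positivity)).2 hCφA)
    _ ≤ _ := wNormR_pvCommH_log_indicator_ge hδ hδ23

/-- For `b(x) = log|x|` and `H` the Hilbert transform: for every increasing
`φ : [1,∞) → [0,∞)` with `t²/φ(t) → ∞` and every `C > 0` there are a weight `w ∈ A₂` on `ℝ`
and `f` with `0 < ‖f‖_{L²(w)} < ∞` such that
`‖[b,H]f‖_{L²(w)} > C φ([w]_{A₂}) ‖f‖_{L²(w)}`; consequently
`sup_{w ∈ A₂} ‖[b,H]‖_{L²(w)→L²(w)}/φ([w]_{A₂}) = ∞`. -/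
theorem commutator_hilbert_sharpness
    (φ : ℝ → ℝ) (hφmono : MonotoneOn φ (Set.Ici 1)) (hφpos : ∀ t, 1 ≤ t → 0 ≤ φ t)
    (hφlim : Filter.Tendsto (fun t : ℝ => t ^ 2 / φ t) Filter.atTop Filter.atTop)
    (C : ℝ) (hC : 0 < C) :
    ∃ w : ℝ → ℝ, (∀ x, 0 < w x) ∧ LocallyIntegrable w ∧ A2constR w < ⊤ ∧
      ∃ f : ℝ → ℝ, 0 < wNormR 2 w f ∧ wNormR 2 w f < ⊤ ∧
        ENNReal.ofReal (C * φ ((A2constR w).toReal)) * wNormR 2 w f <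
          wNormR 2 w (pvCommH (fun x => Real.log |x|) f) :=
  commutator_hilbert_sharpness_general φ hφmono hφlim C hC
end
end

section
/- Let n ≥ 1, j ∈ {1,…,n}, let k ≥ 1 be an integer, and let 0 < δ < 1. Set E = (0,1)^n ∩ B(0,1) and Ω = { x ∈ ℝ^n : |x| > 1 and x_i < 0 for all i = 1,…,n }. There exists a constant c = c(n) > 0, depending only on n (the surface measure of E ∩ S^{n−1}), such that for every x ∈ Ω: ∫_E |x_j − y_j| (log(|x|/|y|))^k |y|^{δ−n} |x−y|^{−(n+1)} dy ≥ c · k! · |x_j| / ( δ^{k+1} (|x|+1)^{n+1} ). (The left-hand side equals |R^k_{j,b} f(x)| for b(y) = log|y|, f(y) = |y|^{δ−n} 1_E(y), and R^k_{j,b} the k-th order commutator of the j-th Riesz transform.) -/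
/-!
On `E` the kernel dominates the radial function
`|x_j| (|x| + 1)^{-(n+1)} (log (1/|y|))^k |y|^{δ-n}`, because `x` and `y` lie in opposite orthants
and `|x| > 1`. Since `E` is the part of the open positive orthant (a cone) inside the unit ball,
polar coordinates turn the integral of this minorant into
`σ(E ∩ S^{n-1}) ∫_0^1 (log (1/r))^k r^{δ-1} dr`, and the substitution `r = e^{-t}` evaluates the
last integral as `Γ(k+1) / δ^{k+1} = k! / δ^{k+1}`. The constant is `c = σ(E ∩ S^{n-1})`,
which `orthantSphereMeasure` expresses through `Measure.toSphere`.
-/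

open MeasureTheory ENNReal Set Metric

noncomputable section

theorem lintegral_pow_mul_exp_neg_mul_Ioi (k : ℕ) {δ : ℝ} (hδ : 0 < δ) :
    ∫⁻ t in Ioi (0 : ℝ), ENNReal.ofReal (t ^ k * Real.exp (-(δ * t))) =
      ENNReal.ofReal (k.factorial / δ ^ (k + 1)) := by
  have hint : IntegrableOn (fun t : ℝ => t ^ k * Real.exp (-(δ * t))) (Ioi 0) := by
    simpa [neg_mul] using integrableOn_rpow_mul_exp_neg_mul_rpow (s := k) (p := 1) (b := δ)
      (by linarith [k.cast_nonneg (α := ℝ)]) one_pos hδ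
  have hval : ∫ t in Ioi (0 : ℝ), t ^ k * Real.exp (-(δ * t)) = k.factorial / δ ^ (k + 1) := by
    have h := Real.integral_rpow_mul_exp_neg_mul_Ioi (a := k + 1) (by positivity) hδ
    rw [add_sub_cancel_right, Real.Gamma_nat_eq_factorial, ← Nat.cast_add_one,
      Real.rpow_natCast] at h
    simp only [Real.rpow_natCast] at h
    rw [h, div_pow, one_pow, one_div_mul_eq_div]
  rw [← hval, ofReal_integral_eq_lintegral_ofReal hint]
  filter_upwards [ae_restrict_mem measurableSet_Ioi] with t (ht : 0 < t)
  positivity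

theorem lintegral_neg_log_pow_mul_rpow_Ioo (k : ℕ) {δ : ℝ} (hδ : 0 < δ) :
    ∫⁻ r in Ioo (0 : ℝ) 1, ENNReal.ofReal ((-Real.log r) ^ k * r ^ (δ - 1)) =
      ENNReal.ofReal (k.factorial / δ ^ (k + 1)) := by
  have himage : (fun t => Real.exp (-t)) '' Ioi 0 = Ioo 0 1 := by
    rw [← Real.exp_zero, ← Real.image_exp_Iio, ← neg_zero, ← image_neg_Ioi, image_image,
      neg_zero]
  rw [← himage, lintegral_image_eq_lintegral_abs_deriv_mul measurableSet_Ioi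
    (fun t _ => (hasDerivAt_neg t).exp.hasDerivWithinAt) (fun s _ t _ h => by simpa using h),
    ← lintegral_pow_mul_exp_neg_mul_Ioi k hδ]
  refine setLIntegral_congr_fun measurableSet_Ioi fun t _ => ?_
  rw [← ofReal_mul (abs_nonneg _), Real.log_exp, neg_neg, ← Real.exp_mul,
    abs_of_neg (by simp [Real.exp_pos])]
  congr 1
  rw [mul_neg_one, neg_neg, mul_left_comm, ← Real.exp_add]
  ring_nf

section Cone

variable {E : Type*} [NormedAddCommGroup E] [NormedSpace ℝ E] [MeasurableSpace E] [BorelSpace E]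
  [FiniteDimensional ℝ E] [Nontrivial E] (μ : Measure E) [μ.IsAddHaarMeasure] {C : Set E}

theorem setLIntegral_fun_norm_of_smul_mem (hC : MeasurableSet C)
    (hsmul : ∀ x ∈ C, ∀ r : ℝ, 0 < r → r • x ∈ C) {f : ℝ → ℝ≥0∞} (hf : Measurable f) :
    ∫⁻ x in C, f ‖x‖ ∂μ = μ.toSphere (Subtype.val ⁻¹' C) *
      ∫⁻ r in Ioi (0 : ℝ), ENNReal.ofReal (r ^ (Module.finrank ℝ E - 1)) * f r := by
  -- Membership in `C` depends only on the direction of `x`, so in polar coordinates the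
  -- integrand is a product of a function on the sphere and a function of the radius.
  have hcone : ∀ x : E, x ≠ 0 → (x ∈ C ↔ ‖x‖⁻¹ • x ∈ C) := fun x hx =>
    ⟨fun h => hsmul x h _ (by positivity), fun h => by
      simpa [smul_smul, hx] using hsmul _ h ‖x‖ (norm_pos_iff.2 hx)⟩
  calc ∫⁻ x in C, f ‖x‖ ∂μ
      = ∫⁻ x : ({0}ᶜ : Set E), C.indicator (fun x => f ‖x‖) x ∂(μ.comap (↑)) := by
        rw [lintegral_subtype_comap (measurableSet_singleton _).compl, restrict_compl_singleton,
          lintegral_indicator hC]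
    _ = ∫⁻ p, (Subtype.val ⁻¹' C).indicator 1 p.1 * f p.2
          ∂(μ.toSphere.prod (Measure.volumeIoiPow (Module.finrank ℝ E - 1))) := by
        rw [← μ.measurePreserving_homeomorphUnitSphereProd.lintegral_comp_emb
          (Homeomorph.measurableEmbedding _)]
        congr 1 with x
        have hmem : (homeomorphUnitSphereProd E x).1 ∈ Subtype.val ⁻¹' C ↔ (x : E) ∈ C := by
          rw [mem_preimage, homeomorphUnitSphereProd_apply_fst_coe, ← hcone x x.2]
        by_cases hxC : (x : E) ∈ C <;> simp [indicator, hxC, hmem]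
    _ = _ := by
        have hf' : Measurable fun r : Ioi (0 : ℝ) => f r := hf.comp measurable_subtype_coe
        rw [lintegral_prod_mul (f := (Subtype.val ⁻¹' C).indicator 1)
            (aemeasurable_one.indicator (measurable_subtype_coe hC)) hf'.aemeasurable,
          lintegral_indicator_one (measurable_subtype_coe hC), Measure.volumeIoiPow,
          lintegral_withDensity_eq_lintegral_mul _ (by fun_prop) hf']
        exact congrArg _
          (lintegral_subtype_comap measurableSet_Ioi fun r => ENNReal.ofReal (r ^ _) * f r)

theorem setLIntegral_inter_ball_neg_log_pow_mul_rpow (hC : MeasurableSet C)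
    (hsmul : ∀ x ∈ C, ∀ r : ℝ, 0 < r → r • x ∈ C) (k : ℕ) {δ : ℝ} (hδ : 0 < δ) :
    ∫⁻ y in C ∩ ball 0 1,
        ENNReal.ofReal ((-Real.log ‖y‖) ^ k * ‖y‖ ^ (δ - Module.finrank ℝ E)) ∂μ =
      μ.toSphere (Subtype.val ⁻¹' C) * ENNReal.ofReal (k.factorial / δ ^ (k + 1)) := by
  set d := Module.finrank ℝ E
  have hd : 1 ≤ d := Module.finrank_pos
  set g : ℝ → ℝ≥0∞ :=
    (Iio 1).indicator fun r => ENNReal.ofReal ((-Real.log r) ^ k * r ^ (δ - d))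
  have hg : Measurable g := (by fun_prop : Measurable _).indicator measurableSet_Iio
  calc ∫⁻ y in C ∩ ball 0 1, ENNReal.ofReal ((-Real.log ‖y‖) ^ k * ‖y‖ ^ (δ - d)) ∂μ
      = ∫⁻ y in C, g ‖y‖ ∂μ := by
        rw [inter_comm, ← Measure.restrict_restrict measurableSet_ball,
          ← lintegral_indicator measurableSet_ball]
        congr 1 with y
        simp [g, indicator]
    _ = μ.toSphere (Subtype.val ⁻¹' C) *
          ∫⁻ r in Ioo (0 : ℝ) 1, ENNReal.ofReal ((-Real.log r) ^ k * r ^ (δ - 1)) := by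
        rw [setLIntegral_fun_norm_of_smul_mem μ hC hsmul hg, ← Iio_inter_Ioi,
          ← Measure.restrict_restrict measurableSet_Iio, ← lintegral_indicator measurableSet_Iio]
        congr 1
        refine setLIntegral_congr_fun measurableSet_Ioi fun r (hr : 0 < r) => ?_
        by_cases hr1 : r < 1
        · simp only [g, indicator, mem_Iio, hr1, if_true]
          rw [← ofReal_mul (by positivity), ← Real.rpow_natCast, mul_left_comm,
            ← Real.rpow_add hr, Nat.cast_sub hd]
          ring_nf
        · simp [g, hr1]
    _ = _ := by rw [lintegral_neg_log_pow_mul_rpow_Ioo k hδ]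

end Cone

def positiveOrthant (n : ℕ) : Set (EuclideanSpace ℝ (Fin n)) := {x | ∀ i, 0 < x i}

theorem isOpen_positiveOrthant (n : ℕ) : IsOpen (positiveOrthant n) := by
  simp only [positiveOrthant, ofPred_forall]
  exact isOpen_iInter_of_finite fun i => isOpen_lt continuous_const (by fun_prop)

theorem smul_mem_positiveOrthant {n : ℕ} {x : EuclideanSpace ℝ (Fin n)}
    (hx : x ∈ positiveOrthant n) {r : ℝ} (hr : 0 < r) : r • x ∈ positiveOrthant n := fun i => by
  simpa using mul_pos hr (hx i)

theorem positiveOrthant_inter_ball (n : ℕ) :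
    positiveOrthant n ∩ ball 0 1 =
      {y : EuclideanSpace ℝ (Fin n) | (∀ i, y i ∈ Ioo (0 : ℝ) 1) ∧ ‖y‖ < 1} := by
  ext y
  simp only [mem_ofPred_eq, mem_Ioo, mem_inter_iff, mem_ball_zero_iff, positiveOrthant]
  exact ⟨fun h => ⟨fun i => ⟨h.1 i,
    ((Real.le_norm_self _).trans (PiLp.norm_apply_le y i)).trans_lt h.2⟩, h.2⟩,
    fun h => ⟨fun i => (h.1 i).1, h.2⟩⟩

def orthantSphereMeasure (n : ℕ) : ℝ :=
  (volume.toSphere (Subtype.val ⁻¹' positiveOrthant n)).toReal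

theorem orthantSphereMeasure_pos {n : ℕ} (hn : 1 ≤ n) : 0 < orthantSphereMeasure n := by
  refine ENNReal.toReal_pos ?_ (measure_ne_top _ _)
  set v : EuclideanSpace ℝ (Fin n) := WithLp.toLp 2 fun _ => 1
  have hv : v ≠ 0 := fun h => by simpa [v] using congrArg (fun w => w ⟨0, hn⟩) h
  refine ((isOpen_positiveOrthant n).preimage continuous_subtype_val).measure_ne_zero _
    ⟨⟨‖v‖⁻¹ • v, by simp [norm_smul, hv]⟩, fun i => ?_⟩
  simpa [v] using hv

theorem setLIntegral_positiveOrthant_inter_ball_neg_log_pow_mul_rpow {n : ℕ} (hn : 1 ≤ n)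
    (k : ℕ) {δ : ℝ} (hδ : 0 < δ) :
    ∫⁻ y in positiveOrthant n ∩ ball 0 1, ENNReal.ofReal ((-Real.log ‖y‖) ^ k * ‖y‖ ^ (δ - n)) =
      ENNReal.ofReal (orthantSphereMeasure n * (k.factorial / δ ^ (k + 1))) := by
  have : Nonempty (Fin n) := ⟨⟨0, hn⟩⟩
  have h := setLIntegral_inter_ball_neg_log_pow_mul_rpow volume
    (isOpen_positiveOrthant n).measurableSet (fun _ hy _ hr => smul_mem_positiveOrthant hy hr) k hδ
  rwa [finrank_euclideanSpace_fin, ← ofReal_toReal (measure_ne_top _ _),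
    ← ofReal_mul ENNReal.toReal_nonneg] at h

theorem abs_mul_rpow_mul_neg_log_pow_le {n : ℕ} {x y : EuclideanSpace ℝ (Fin n)} {j : Fin n}
    (k : ℕ) (s : ℝ) {p : ℝ} (hp : p ≤ 0) (hx : 1 ≤ ‖x‖) (hxj : x j < 0) (hyj : 0 < y j)
    (hy : ‖y‖ < 1) :
    |x j| * (‖x‖ + 1) ^ p * ((-Real.log ‖y‖) ^ k * ‖y‖ ^ s) ≤
      |x j - y j| * Real.log (‖x‖ / ‖y‖) ^ k * ‖y‖ ^ s * ‖x - y‖ ^ p := by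
  have hy0 : 0 < ‖y‖ := hyj.trans_le ((Real.le_norm_self _).trans (PiLp.norm_apply_le y j))
  have hxy0 : 0 < ‖x - y‖ := by
    refine lt_of_lt_of_le ?_ (PiLp.norm_apply_le (x - y) j)
    simp only [PiLp.sub_apply, Real.norm_eq_abs, abs_pos]
    linarith
  have hlog : 0 ≤ -Real.log ‖y‖ := neg_nonneg.2 (Real.log_nonpos hy0.le hy.le)
  have hlog_le : -Real.log ‖y‖ ≤ Real.log (‖x‖ / ‖y‖) := by
    rw [Real.log_div (by positivity) hy0.ne']
    linarith [Real.log_nonneg hx]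
  have hcoord : |x j| ≤ |x j - y j| := by
    rw [abs_of_neg hxj, abs_of_neg (by linarith)]
    linarith
  have hdist : ‖x - y‖ ≤ ‖x‖ + 1 := (norm_sub_le x y).trans (by linarith)
  have hcoord_log : |x j| * (-Real.log ‖y‖) ^ k ≤ |x j - y j| * Real.log (‖x‖ / ‖y‖) ^ k :=
    mul_le_mul hcoord (pow_le_pow_left₀ hlog hlog_le k) (by positivity) (abs_nonneg _)
  have hrhs : 0 ≤ |x j - y j| * Real.log (‖x‖ / ‖y‖) ^ k * ‖y‖ ^ s :=
    mul_nonneg (mul_nonneg (abs_nonneg _) (pow_nonneg (hlog.trans hlog_le) k)) (by positivity)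
  calc |x j| * (‖x‖ + 1) ^ p * ((-Real.log ‖y‖) ^ k * ‖y‖ ^ s)
      = |x j| * (-Real.log ‖y‖) ^ k * ‖y‖ ^ s * (‖x‖ + 1) ^ p := by ring
    _ ≤ _ := mul_le_mul (mul_le_mul_of_nonneg_right hcoord_log (by positivity))
        (Real.rpow_le_rpow_of_nonpos hxy0 hdist hp) (by positivity) hrhs

/-- With `E = (0,1)^n ∩ B(0,1)` and
`Ω = {x : |x| > 1, x_i < 0 ∀i}`, there is `c = c(n) > 0` (the surface measure of
`E ∩ S^{n-1}`) such that for every `j`, every integer `k ≥ 1`, every `0 < δ < 1` and every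
`x ∈ Ω`,
`∫_E |x_j - y_j| (log(|x|/|y|))^k |y|^{δ-n} |x-y|^{-(n+1)} dy
  ≥ c k! |x_j| / (δ^{k+1} (|x|+1)^{n+1})`.
The left-hand side equals `|R^k_{j,b} f(x)|` for `b(y) = log|y|` and
`f(y) = |y|^{δ-n} 1_E(y)`. -/
theorem riesz_commutator_pointwise_lower_bound (n : ℕ) (hn : 1 ≤ n) :
    ∃ c : ℝ, 0 < c ∧
      ∀ (j : Fin n) (k : ℕ), 1 ≤ k → ∀ δ : ℝ, 0 < δ → δ < 1 →
      ∀ x : EuclideanSpace ℝ (Fin n), 1 < ‖x‖ → (∀ i, x i < 0) →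
        ENNReal.ofReal (c * (Nat.factorial k : ℝ) * |x j| /
            (δ ^ (k + 1) * (‖x‖ + 1) ^ (n + 1))) ≤
          ∫⁻ y in {y : EuclideanSpace ℝ (Fin n) |
              (∀ i, y i ∈ Set.Ioo (0 : ℝ) 1) ∧ ‖y‖ < 1},
            ENNReal.ofReal (|x j - y j| * (Real.log (‖x‖ / ‖y‖)) ^ k *
              ‖y‖ ^ (δ - (n : ℝ)) * ‖x - y‖ ^ (-((n : ℝ) + 1))) := by
  refine ⟨orthantSphereMeasure n, orthantSphereMeasure_pos hn, fun j k _ δ hδ _ x hx hxneg => ?_⟩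
  have hA : 0 ≤ |x j| * (‖x‖ + 1) ^ (-((n : ℝ) + 1)) := by positivity
  have hpow : (‖x‖ + 1) ^ (-((n : ℝ) + 1)) = ((‖x‖ + 1) ^ (n + 1))⁻¹ := by
    rw [Real.rpow_neg (by positivity), ← Nat.cast_add_one, Real.rpow_natCast]
  rw [← positiveOrthant_inter_ball]
  calc ENNReal.ofReal (orthantSphereMeasure n * k.factorial * |x j| /
          (δ ^ (k + 1) * (‖x‖ + 1) ^ (n + 1)))
      = ENNReal.ofReal (|x j| * (‖x‖ + 1) ^ (-((n : ℝ) + 1))) *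
          ENNReal.ofReal (orthantSphereMeasure n * (k.factorial / δ ^ (k + 1))) := by
        rw [← ofReal_mul hA, hpow]
        congr 1
        field_simp
    _ = ∫⁻ y in positiveOrthant n ∩ ball 0 1, ENNReal.ofReal
          (|x j| * (‖x‖ + 1) ^ (-((n : ℝ) + 1)) * ((-Real.log ‖y‖) ^ k * ‖y‖ ^ (δ - n))) := by
        rw [← setLIntegral_positiveOrthant_inter_ball_neg_log_pow_mul_rpow hn k hδ,
          ← lintegral_const_mul' _ _ ofReal_ne_top]
        simp_rw [ofReal_mul hA]
    _ ≤ _ := setLIntegral_mono' ((isOpen_positiveOrthant n).measurableSet.inter measurableSet_ball)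
        fun y ⟨hy, hy1⟩ => ofReal_le_ofReal <| abs_mul_rpow_mul_neg_log_pow_le k (δ - n)
          (by linarith [n.cast_nonneg (α := ℝ)]) hx.le (hxneg j) (hy j) (mem_ball_zero_iff.1 hy1)
end
end
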